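/- arXiv:1801.00362 — 7 statements merged into one kernel-verified Lean document; each statement's English description precedes it below -/
import Mathlib

section
/- Let N ≥ 1 and m ≥ 2 be integers and let A_0, A_1, …, A_m be N×N complex matrices. Define the mN×mN block matrices E and F as follows: E is block diagonal with diagonal blocks (A_m, I_N, I_N, …, I_N); the first block row of F is (−A_{m−1}, A_m − A_{m−2}, −A_{m−3}, …, −A_1, −A_0), for 2 ≤ i ≤ m−1 the i-th block row of F has I_N in block positions (i, i−1) and (i, i+1) and zero blocks elsewhere, and the last block row of F has 2·I_N in block position (m, m−1) and zero blocks elsewhere. Then for every λ ∈ ℂ, the matrix ∑_{j=0}^{m} A_j · T_j(λ) is singular if and only if the matrix λE − (1/2)F is singular. In particular, the solutions of the polynomial eigenvalue problem for P(λ) = ∑_{j=0}^{m} A_j T_j(λ) are exactly the eigenvalues of the linear matrix pencil (E, (1/2)F). -/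
open Polynomial

/-- The block-diagonal matrix `E` with diagonal blocks `(A_m, I_N, …, I_N)`. -/
def chebPencilE (N m : ℕ) (A : Fin (m + 1) → Matrix (Fin N) (Fin N) ℂ) :
    Matrix (Fin m × Fin N) (Fin m × Fin N) ℂ :=
  fun p q =>
    if p.1 = q.1 then
      (if (p.1 : ℕ) = 0 then A (Fin.last m) p.2 q.2
       else if p.2 = q.2 then 1 else 0)
    else 0

/-- The block matrix `F`: first block row `(−A_{m−1}, A_m − A_{m−2}, −A_{m−3}, …, −A_0)`;
for `2 ≤ i ≤ m−1` (1-based) the `i`-th block row has `I_N` in block positions `(i, i−1)`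
and `(i, i+1)`; the last block row has `2·I_N` in block position `(m, m−1)`. -/
def chebPencilF (N m : ℕ) (A : Fin (m + 1) → Matrix (Fin N) (Fin N) ℂ) :
    Matrix (Fin m × Fin N) (Fin m × Fin N) ℂ :=
  fun p q =>
    if (p.1 : ℕ) = 0 then
      (if (q.1 : ℕ) = 0 then -(A ⟨m - 1, by omega⟩ p.2 q.2)
       else (if (q.1 : ℕ) = 1 then A (Fin.last m) p.2 q.2 else 0)
              - A ⟨m - 1 - (q.1 : ℕ), by omega⟩ p.2 q.2)
    else if (p.1 : ℕ) = m - 1 then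
      (if (q.1 : ℕ) = m - 2 then (2 : ℂ) * (if p.2 = q.2 then 1 else 0) else 0)
    else
      (if (q.1 : ℕ) = (p.1 : ℕ) - 1 ∨ (q.1 : ℕ) = (p.1 : ℕ) + 1 then
        (if p.2 = q.2 then 1 else 0) else 0)

section AuxDet

open Matrix Finset

/-- Determinant of a matrix over `Fin n` that is "upper triangular except for
an `r × r` top-left block `T`". -/
lemma det_block_aux {n r : ℕ} (hr : r ≤ n) (B : Matrix (Fin n) (Fin n) ℂ)
    (T : Matrix (Fin r) (Fin r) ℂ)
    (hT : ∀ (a b : Fin n) (ha : (a : ℕ) < r) (hb : (b : ℕ) < r),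
      B a b = T ⟨a, ha⟩ ⟨b, hb⟩)
    (h0 : ∀ a b : Fin n, r ≤ (a : ℕ) → (b : ℕ) < (a : ℕ) → B a b = 0) :
    B.det = T.det *
      ∏ i : Fin (n - r), B ⟨r + i, by omega⟩ ⟨r + i, by omega⟩ := by
  have h : r + (n - r) = n := by omega
  set e : Fin r ⊕ Fin (n - r) ≃ Fin n := finSumFinEquiv.trans (finCongr h) with he
  have hel : ∀ i : Fin r, (e (Sum.inl i) : ℕ) = (i : ℕ) := fun i => rfl
  have her : ∀ i : Fin (n - r), (e (Sum.inr i) : ℕ) = r + (i : ℕ) := fun i => rfl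
  have key : B.submatrix e e =
      Matrix.fromBlocks T
        (B.submatrix (fun i => e (Sum.inl i)) (fun j => e (Sum.inr j))) 0
        (B.submatrix (fun i => e (Sum.inr i)) (fun j => e (Sum.inr j))) := by
    funext p q
    cases p with
    | inl i =>
      cases q with
      | inl j =>
        have hi : ((e (Sum.inl i) : Fin n) : ℕ) < r := by rw [hel]; exact i.isLt
        have hj : ((e (Sum.inl j) : Fin n) : ℕ) < r := by rw [hel]; exact j.isLt
        simp only [Matrix.submatrix_apply, Matrix.fromBlocks_apply₁₁]
        rw [hT _ _ hi hj]
        congr 1 <;> apply Fin.ext <;> simp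
      | inr j => rfl
    | inr i =>
      cases q with
      | inl j =>
        simp only [Matrix.submatrix_apply, Matrix.fromBlocks_apply₂₁, Matrix.zero_apply]
        exact h0 _ _ (by rw [her]; omega) (by rw [her, hel]; omega)
      | inr j => rfl
  have hdet : B.det = T.det *
      (B.submatrix (fun i => e (Sum.inr i)) (fun j => e (Sum.inr j))).det := by
    rw [← Matrix.det_submatrix_equiv_self e, key, Matrix.det_fromBlocks_zero₂₁]
  rw [hdet]
  congr 1
  rw [Matrix.det_of_upperTriangular]
  · apply Finset.prod_congr rfl
    intro i _
    simp only [Matrix.submatrix_apply]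
    congr 1 <;> apply Fin.ext <;> simp [her]
  · intro i j hij
    simp only [Matrix.submatrix_apply]
    have hji : (j : ℕ) < (i : ℕ) := hij
    exact h0 _ _ (by rw [her]; omega) (by rw [her, her]; omega)

/-- Pair-indexed version: a matrix on `Fin m × Fin N` whose top-left block (block row and
column `0`) is `T`, which vanishes strictly below the "diagonal" (in the lexicographic sense)
outside block row 0, and whose diagonal entries outside block row 0 are nonzero, has
determinant a nonzero multiple of `det T`. -/
lemma det_block_aux2 {m N : ℕ} (hN : 1 ≤ N) (hm : 1 ≤ m)
    (B : Matrix (Fin m × Fin N) (Fin m × Fin N) ℂ) (T : Matrix (Fin N) (Fin N) ℂ)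
    (hT : ∀ p q : Fin m × Fin N, (p.1 : ℕ) = 0 → (q.1 : ℕ) = 0 → B p q = T p.2 q.2)
    (h0 : ∀ p q : Fin m × Fin N, 1 ≤ (p.1 : ℕ) →
      ((q.1 : ℕ) < (p.1 : ℕ) ∨ ((q.1 : ℕ) = (p.1 : ℕ) ∧ (q.2 : ℕ) < (p.2 : ℕ))) → B p q = 0)
    (hd : ∀ p : Fin m × Fin N, 1 ≤ (p.1 : ℕ) → B p p ≠ 0) :
    ∃ c : ℂ, c ≠ 0 ∧ B.det = T.det * c := by
  set ep : Fin (m * N) ≃ Fin m × Fin N := finProdFinEquiv.symm with hepdef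
  have hxe : ∀ x : Fin (m * N),
      ((ep x).2 : ℕ) + N * ((ep x).1 : ℕ) = (x : ℕ) := by
    intro x
    have h := finProdFinEquiv.apply_symm_apply x
    exact congrArg Fin.val h
  have hblock0 : ∀ x : Fin (m * N), (x : ℕ) < N → ((ep x).1 : ℕ) = 0 := by
    intro x hx
    by_contra hc
    have h1 : 1 ≤ ((ep x).1 : ℕ) := by omega
    have h2 : N * 1 ≤ N * ((ep x).1 : ℕ) := Nat.mul_le_mul_left N h1
    have h3 := hxe x
    have h4 := ((ep x).2).isLt
    have h5 : N * 1 = N := by ring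
    linarith
  have hblock1 : ∀ x : Fin (m * N), N ≤ (x : ℕ) → 1 ≤ ((ep x).1 : ℕ) := by
    intro x hx
    by_contra hc
    have h1 : ((ep x).1 : ℕ) = 0 := by omega
    have h3 := hxe x
    have h4 := ((ep x).2).isLt
    rw [h1, Nat.mul_zero] at h3
    omega
  have hlt : ∀ x y : Fin (m * N), (y : ℕ) < (x : ℕ) →
      (((ep y).1 : ℕ) < ((ep x).1 : ℕ) ∨
        (((ep y).1 : ℕ) = ((ep x).1 : ℕ) ∧ ((ep y).2 : ℕ) < ((ep x).2 : ℕ))) := by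
    intro x y h
    have h1 := hxe x
    have h2 := hxe y
    have hk := ((ep x).2).isLt
    have hl := ((ep y).2).isLt
    rcases Nat.lt_trichotomy ((ep y).1 : ℕ) ((ep x).1 : ℕ) with h' | h' | h'
    · exact Or.inl h'
    · right
      refine ⟨h', ?_⟩
      rw [h'] at h2
      linarith
    · exfalso
      have h5 : (((ep x).1 : ℕ) + 1) ≤ ((ep y).1 : ℕ) := h'
      have h6 : N * (((ep x).1 : ℕ) + 1) ≤ N * ((ep y).1 : ℕ) := Nat.mul_le_mul_left N h5
      have h7 : N * (((ep x).1 : ℕ) + 1) = N * ((ep x).1 : ℕ) + N := by ring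
      linarith
  have hNm : N ≤ m * N := by nlinarith
  have key := det_block_aux hNm (B.submatrix ep ep) T
    (fun x y hx hy => by
      rw [Matrix.submatrix_apply, hT (ep x) (ep y) (hblock0 x hx) (hblock0 y hy)]
      have h1 := hxe x
      have h2 := hxe y
      rw [hblock0 x hx, Nat.mul_zero] at h1
      rw [hblock0 y hy, Nat.mul_zero] at h2
      congr 1 <;> apply Fin.ext <;> simp <;> omega)
    (fun x y hx hy => by
      rw [Matrix.submatrix_apply]
      exact h0 (ep x) (ep y) (hblock1 x hx) (hlt x y hy))
  refine ⟨_, ?_, by rw [← Matrix.det_submatrix_equiv_self ep B, key]⟩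
  apply Finset.prod_ne_zero_iff.mpr
  intro i _
  apply hd
  apply hblock1
  simp

end AuxDet

section Main

open Matrix Finset

set_option maxHeartbeats 2000000 in
/-- For every `λ ∈ ℂ`, the matrix `∑_{j=0}^{m} A_j · T_j(λ)`
(`T_j` the `j`-th Chebyshev polynomial of the first kind) is singular if and only if
`λE − (1/2)F` is singular; i.e., the solutions of the polynomial eigenvalue problem for
`P(λ) = ∑_j A_j T_j(λ)` are exactly the eigenvalues of the pencil `(E, (1/2)F)`. -/
theorem chebyshev_polynomial_eigenvalue_linearization
    (N m : ℕ) (hN : 1 ≤ N) (hm : 2 ≤ m)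
    (A : Fin (m + 1) → Matrix (Fin N) (Fin N) ℂ) (lam : ℂ) :
    (∑ j : Fin (m + 1),
        (Polynomial.eval lam (Polynomial.Chebyshev.T ℂ ((j : ℕ) : ℤ))) • A j).det = 0 ↔
      (lam • chebPencilE N m A - (1 / 2 : ℂ) • chebPencilF N m A).det = 0 := by
  haveI : NeZero m := ⟨by omega⟩
  set t : ℕ → ℂ := fun j => Polynomial.eval lam (Polynomial.Chebyshev.T ℂ (j : ℤ)) with htdef
  set a : ℕ → Matrix (Fin N) (Fin N) ℂ := fun j => if h : j < m + 1 then A ⟨j, h⟩ else 0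
    with hadef
  have haA : ∀ (j : ℕ) (h : j < m + 1), A ⟨j, h⟩ = a j := by
    intro j h; simp [hadef, h]
    intro hc; omega
  have hlast : A (Fin.last m) = a m := haA m (by omega)
  set Pm : Matrix (Fin N) (Fin N) ℂ := ∑ j : Fin (m + 1), t (j : ℕ) • A j with hPmdef
  set M : Matrix (Fin m × Fin N) (Fin m × Fin N) ℂ :=
    lam • chebPencilE N m A - (1 / 2 : ℂ) • chebPencilF N m A with hMdef
  -- basic Chebyshev facts
  have ht0 : t 0 = 1 := by simp [htdef]
  have ht1 : t 1 = lam := by simp [htdef]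
  have htrec : ∀ j : ℕ, t (j + 2) = 2 * lam * t (j + 1) - t j := by
    intro j
    have h := Polynomial.Chebyshev.T_add_two ℂ (j : ℤ)
    simp only [htdef]
    push_cast
    rw [h]
    simp
  -- entries of Pm
  have hPmE : ∀ y z : Fin N, Pm y z = ∑ j ∈ Finset.range (m + 1), t j * a j y z := by
    intro y z
    rw [hPmdef]
    rw [Matrix.sum_apply]
    rw [show (∑ j : Fin (m + 1), (t (j : ℕ) • A j) y z)
        = ∑ j : Fin (m + 1), t (j : ℕ) * a (j : ℕ) y z from
      Finset.sum_congr rfl (fun j _ => by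
        rw [Matrix.smul_apply, smul_eq_mul, ← haA (j : ℕ) j.isLt, Fin.eta])]
    exact Fin.sum_univ_eq_sum_range (fun j => t j * a j y z) (m + 1)
  -- explicit entries of M
  have hEnt : ∀ (pi : Fin m) (x : Fin N) (i : ℕ) (h : i < m) (z : Fin N),
      M (pi, x) (⟨i, h⟩, z) =
        lam * (if (pi : ℕ) = i then
            (if (pi : ℕ) = 0 then a m x z else if (x : ℕ) = (z : ℕ) then 1 else 0) else 0)
        - (1 / 2 : ℂ) * (if (pi : ℕ) = 0 then
            (if i = 0 then -(a (m - 1) x z)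
             else (if i = 1 then a m x z else 0) - a (m - 1 - i) x z)
          else if (pi : ℕ) = m - 1 then
            (if i = m - 2 then 2 * (if (x : ℕ) = (z : ℕ) then (1 : ℂ) else 0) else 0)
          else (if i = (pi : ℕ) - 1 ∨ i = (pi : ℕ) + 1 then
            (if (x : ℕ) = (z : ℕ) then (1 : ℂ) else 0) else 0)) := by
    intro pi x i h z
    simp only [hMdef, Matrix.sub_apply, Matrix.smul_apply, smul_eq_mul,
      chebPencilE, chebPencilF, hlast, haA, Fin.ext_iff]
  -- the key column computation
  have hcol : ∀ (p : Fin m × Fin N) (z : Fin N),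
      (∑ i : Fin m, M p (i, z) * t (m - 1 - (i : ℕ)))
        = if (p.1 : ℕ) = 0 then (1 / 2 : ℂ) * Pm p.2 z else 0 := by
    rintro ⟨pi, px⟩ z
    have hconv : (∑ i : Fin m, M (pi, px) (i, z) * t (m - 1 - (i : ℕ)))
        = ∑ i ∈ Finset.range m,
            (fun i => if h : i < m then M (pi, px) (⟨i, h⟩, z) * t (m - 1 - i) else 0) i := by
      rw [← Fin.sum_univ_eq_sum_range]
      exact Finset.sum_congr rfl fun i _ => by simp [i.isLt]
    rw [hconv]
    by_cases hp0 : (pi : ℕ) = 0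
    · -- first block row
      have hterm : ∀ i ∈ Finset.range m,
          (fun i => if h : i < m then M (pi, px) (⟨i, h⟩, z) * t (m - 1 - i) else 0) i
            = (1 / 2 : ℂ) * (t (m - 1 - i) * a (m - 1 - i) px z)
              + (if i = 0 then lam * t (m - 1) * a m px z else 0)
              + (if i = 1 then -(1 / 2 : ℂ) * t (m - 2) * a m px z else 0) := by
        intro i hi
        rw [Finset.mem_range] at hi
        simp only [dif_pos hi]
        rw [hEnt pi px i hi z]
        have hpilt := pi.isLt
        have e1 : m - 1 - 0 = m - 1 := by omega
        have e2 : m - 1 - 1 = m - 2 := by omega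
        split_ifs <;> (try omega) <;> subst_vars <;> (try rw [hp0]) <;> (try rw [e1]) <;> (try rw [e2]) <;> ring
      rw [Finset.sum_congr rfl hterm]
      rw [Finset.sum_add_distrib, Finset.sum_add_distrib,
        Finset.sum_ite_eq' (Finset.range m) 0, Finset.sum_ite_eq' (Finset.range m) 1,
        if_pos (Finset.mem_range.mpr (by omega)), if_pos (Finset.mem_range.mpr (by omega))]
      rw [← Finset.mul_sum,
        Finset.sum_range_reflect (fun j => t j * a j px z) m]
      rw [if_pos hp0, hPmE px z, Finset.sum_range_succ]
      have htm := htrec (m - 2)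
      rw [show m - 2 + 2 = m from by omega, show m - 2 + 1 = m - 1 from by omega] at htm
      rw [htm]
      ring
    · by_cases hpl : (pi : ℕ) = m - 1
      · -- last block row
        have hterm : ∀ i ∈ Finset.range m,
            (fun i => if h : i < m then M (pi, px) (⟨i, h⟩, z) * t (m - 1 - i) else 0) i
              = (if i = m - 1 then
                    lam * t (m - 1 - i) * (if (px : ℕ) = (z : ℕ) then (1 : ℂ) else 0) else 0)
                + (if i = m - 2 then
                    -(t (m - 1 - i)) * (if (px : ℕ) = (z : ℕ) then (1 : ℂ) else 0) else 0) := by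
          intro i hi
          rw [Finset.mem_range] at hi
          simp only [dif_pos hi]
          rw [hEnt pi px i hi z]
          have hpilt := pi.isLt
          split_ifs <;> (try omega) <;> ring
        rw [Finset.sum_congr rfl hterm]
        rw [Finset.sum_add_distrib,
          Finset.sum_ite_eq' (Finset.range m) (m - 1), Finset.sum_ite_eq' (Finset.range m) (m - 2),
          if_pos (Finset.mem_range.mpr (by omega)), if_pos (Finset.mem_range.mpr (by omega))]
        rw [show m - 1 - (m - 1) = 0 from by omega, show m - 1 - (m - 2) = 1 from by omega,
          ht0, ht1, if_neg hp0]
        ring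
      · -- middle block rows
        have hterm : ∀ i ∈ Finset.range m,
            (fun i => if h : i < m then M (pi, px) (⟨i, h⟩, z) * t (m - 1 - i) else 0) i
              = (if i = (pi : ℕ) then
                    lam * t (m - 1 - i) * (if (px : ℕ) = (z : ℕ) then (1 : ℂ) else 0) else 0)
                + (if i = (pi : ℕ) - 1 then
                    -(1 / 2 : ℂ) * t (m - 1 - i) * (if (px : ℕ) = (z : ℕ) then (1 : ℂ) else 0) else 0)
                + (if i = (pi : ℕ) + 1 then
                    -(1 / 2 : ℂ) * t (m - 1 - i) * (if (px : ℕ) = (z : ℕ) then (1 : ℂ) else 0) else 0) := by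
          intro i hi
          rw [Finset.mem_range] at hi
          simp only [dif_pos hi]
          rw [hEnt pi px i hi z]
          have hpilt := pi.isLt
          split_ifs <;> (try omega) <;> ring
        rw [Finset.sum_congr rfl hterm]
        have hpib : 1 ≤ (pi : ℕ) ∧ (pi : ℕ) ≤ m - 2 := by
          have := pi.isLt; omega
        rw [Finset.sum_add_distrib, Finset.sum_add_distrib,
          Finset.sum_ite_eq' (Finset.range m) ((pi : ℕ)),
          Finset.sum_ite_eq' (Finset.range m) ((pi : ℕ) - 1),
          Finset.sum_ite_eq' (Finset.range m) ((pi : ℕ) + 1),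
          if_pos (Finset.mem_range.mpr (by omega)), if_pos (Finset.mem_range.mpr (by omega)),
          if_pos (Finset.mem_range.mpr (by omega))]
        have hu := htrec (m - 2 - (pi : ℕ))
        rw [show m - 2 - (pi : ℕ) + 2 = m - 1 - ((pi : ℕ) - 1) from by omega,
          show m - 2 - (pi : ℕ) + 1 = m - 1 - (pi : ℕ) from by omega] at hu
        rw [show m - 1 - ((pi : ℕ) + 1) = m - 2 - (pi : ℕ) from by omega]
        rw [hu, if_neg hp0]
        ring
  -- the unimodular transformation matrix V
  set V : Matrix (Fin m × Fin N) (Fin m × Fin N) ℂ := fun p q =>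
    if (q.1 : ℕ) = m - 1 then (if p.2 = q.2 then t (m - 1 - (p.1 : ℕ)) else 0)
    else if p = q then 1 else 0 with hVdef
  -- the rotated, block-triangular matrix W
  set W : Matrix (Fin m × Fin N) (Fin m × Fin N) ℂ := fun p q =>
    if (q.1 : ℕ) = 0 then
      (if (p.1 : ℕ) = 0 then (1 / 2 : ℂ) * Pm p.2 q.2 else 0)
    else M p (⟨(q.1 : ℕ) - 1, Nat.lt_of_le_of_lt (Nat.sub_le _ _) q.1.isLt⟩, q.2)
    with hWdef
  set σ : Equiv.Perm (Fin m × Fin N) :=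
    Equiv.prodCongr (Equiv.addLeft (1 : Fin m)) (Equiv.refl (Fin N)) with hσdef
  have hσ1 : ∀ q : Fin m × Fin N,
      ((σ q).1 : ℕ) = if (q.1 : ℕ) = m - 1 then 0 else (q.1 : ℕ) + 1 := by
    intro q
    have hq := q.1.isLt
    have h1 : ((σ q).1 : ℕ) = (((1 : Fin m) : ℕ) + (q.1 : ℕ)) % m := by
      simp only [hσdef, Equiv.prodCongr_apply, Equiv.coe_addLeft, Prod.map_fst]
      exact Fin.val_add _ _
    rw [h1, Fin.val_one', Nat.mod_eq_of_lt (show 1 < m by omega)]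
    by_cases h : (q.1 : ℕ) = m - 1
    · rw [if_pos h, h, show 1 + (m - 1) = m from by omega, Nat.mod_self]
    · rw [if_neg h, Nat.mod_eq_of_lt (by omega)]
      omega
  have hσ2 : ∀ q : Fin m × Fin N, (σ q).2 = q.2 := fun q => rfl
  -- M * V is W with rotated columns
  have hMV : M * V = W.submatrix id σ := by
    funext p q
    rw [Matrix.mul_apply, Matrix.submatrix_apply, id_eq]
    by_cases hq : (q.1 : ℕ) = m - 1
    · have hσq0 : ((σ q).1 : ℕ) = 0 := by rw [hσ1, if_pos hq]
      have hW : W p (σ q) = if (p.1 : ℕ) = 0 then (1 / 2 : ℂ) * Pm p.2 q.2 else 0 := by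
        simp only [hWdef]
        rw [if_pos hσq0, hσ2]
      rw [hW]
      have hV : ∀ s : Fin m × Fin N, V s q = if s.2 = q.2 then t (m - 1 - (s.1 : ℕ)) else 0 :=
        fun s => by simp only [hVdef]; rw [if_pos hq]
      simp only [hV]
      rw [Fintype.sum_prod_type]
      have inner : ∀ i : Fin m,
          (∑ k : Fin N, M p (i, k) * if k = q.2 then t (m - 1 - (i : ℕ)) else 0)
            = M p (i, q.2) * t (m - 1 - (i : ℕ)) := by
        intro i
        rw [Finset.sum_eq_single q.2]
        · simp
        · intro b _ hb; rw [if_neg hb, mul_zero]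
        · intro h; exact absurd (Finset.mem_univ _) h
      rw [Finset.sum_congr rfl fun i _ => inner i]
      exact hcol p q.2
    · have hσq1 : ((σ q).1 : ℕ) = (q.1 : ℕ) + 1 := by rw [hσ1, if_neg hq]
      have hW : W p (σ q) = M p q := by
        simp only [hWdef]
        rw [if_neg (by omega)]
        congr 1
        refine Prod.ext ?_ (hσ2 q)
        apply Fin.ext
        show ((σ q).1 : ℕ) - 1 = (q.1 : ℕ)
        rw [hσq1]
        omega
      rw [hW]
      have hV : ∀ s : Fin m × Fin N, V s q = if s = q then 1 else 0 :=
        fun s => by simp only [hVdef]; rw [if_neg hq]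
      simp only [hV]
      rw [Finset.sum_eq_single q]
      · simp
      · intro b _ hb; rw [if_neg hb, mul_zero]
      · intro h; exact absurd (Finset.mem_univ _) h
  -- determinant of V
  have hdetV : ∃ c : ℂ, c ≠ 0 ∧ V.det = (1 : Matrix (Fin N) (Fin N) ℂ).det * c := by
    apply det_block_aux2 hN (by omega)
    · intro p q hp hq
      simp only [hVdef]
      rw [if_neg (by omega)]
      by_cases h : p = q
      · rw [if_pos h, h, Matrix.one_apply_eq]
      · rw [if_neg h, Matrix.one_apply, if_neg ?_]
        intro hc
        apply h
        refine Prod.ext ?_ hc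
        apply Fin.ext
        omega
    · intro p q hp hlt
      simp only [hVdef]
      have hq1 := q.1.isLt
      have hp1 := p.1.isLt
      by_cases h : (q.1 : ℕ) = m - 1
      · rw [if_pos h, if_neg ?_]
        intro hc
        have h2 : (p.2 : ℕ) = (q.2 : ℕ) := congrArg Fin.val hc
        rcases hlt with h' | ⟨h1', h2'⟩ <;> omega
      · rw [if_neg h, if_neg ?_]
        intro hc
        rw [hc] at hlt
        rcases hlt with h' | ⟨h1', h2'⟩ <;> omega
    · intro p hp
      simp only [hVdef]
      by_cases h : (p.1 : ℕ) = m - 1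
      · rw [if_pos h]; simp [h, ht0]
      · rw [if_neg h]; simp
  -- determinant of W
  have hdetW : ∃ c : ℂ, c ≠ 0 ∧ W.det = ((1 / 2 : ℂ) • Pm).det * c := by
    apply det_block_aux2 hN (by omega)
    · intro p q hp hq
      simp only [hWdef]
      rw [if_pos hq, if_pos hp, Matrix.smul_apply, smul_eq_mul]
    · intro p q hp hlt
      simp only [hWdef]
      have hq1 := q.1.isLt
      have hp1 := p.1.isLt
      by_cases hq0 : (q.1 : ℕ) = 0
      · rw [if_pos hq0, if_neg (by omega)]
      · rw [if_neg hq0]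
        obtain ⟨pi, px⟩ := p
        have hp' : 1 ≤ (pi : ℕ) := hp
        have hp1' : (pi : ℕ) < m := hp1
        rw [hEnt pi px ((q.1 : ℕ) - 1) (Nat.lt_of_le_of_lt (Nat.sub_le _ _) q.1.isLt) q.2]
        have hlt' : (q.1 : ℕ) < (pi : ℕ) ∨ ((q.1 : ℕ) = (pi : ℕ) ∧ (q.2 : ℕ) < (px : ℕ)) := hlt
        rcases hlt' with h' | ⟨h1', h2'⟩ <;>
          split_ifs <;> first | omega | ring
    · intro p hp
      simp only [hWdef]
      have hp1 := p.1.isLt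
      rw [if_neg (by omega)]
      obtain ⟨pi, px⟩ := p
      have hp' : 1 ≤ (pi : ℕ) := hp
      have hp1' : (pi : ℕ) < m := hp1
      rw [hEnt pi px ((pi : ℕ) - 1) (Nat.lt_of_le_of_lt (Nat.sub_le _ _) pi.isLt) px]
      split_ifs <;> first | omega | norm_num
  -- assemble
  obtain ⟨cV, hcV, hVdet⟩ := hdetV
  obtain ⟨cW, hcW, hWdet⟩ := hdetW
  have hMVdet : M.det * V.det = ((Equiv.Perm.sign σ : ℤ) : ℂ) * W.det := by
    rw [← Matrix.det_mul, hMV, Matrix.det_permute']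
  rw [Matrix.det_one, one_mul] at hVdet
  rw [Matrix.det_smul, Fintype.card_fin] at hWdet
  have hsgn : ((Equiv.Perm.sign σ : ℤ) : ℂ) ≠ 0 := by
    rcases Int.units_eq_one_or (Equiv.Perm.sign σ) with h | h <;> rw [h] <;> norm_num
  have hhalf : ((1 : ℂ) / 2) ^ N ≠ 0 := by norm_num
  rw [hVdet, hWdet] at hMVdet
  constructor
  · intro h
    have h2 : M.det * cV = 0 := by rw [hMVdet, h]; ring
    rcases mul_eq_zero.mp h2 with h' | h'
    · exact h'
    · exact absurd h' hcV
  · intro h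
    have h2 : ((Equiv.Perm.sign σ : ℤ) : ℂ) * ((1 / 2 : ℂ) ^ N * Pm.det * cW) = 0 := by
      rw [← hMVdet, h, zero_mul]
    simpa [hsgn, hcW, hhalf, mul_eq_zero] using h2

end Main
end

section
/- Let k > 0 and λ ∈ ℝ. Define f : ℝ → ℝ by f(ζ) = e^{kζ} · ₂F₁(λ, 1−λ; 1+k; e^{2ζ}/(1+e^{2ζ})). Then: (i) f is twice differentiable on ℝ and satisfies the Schrödinger equation with Pöschl–Teller potential f''(ζ) = (k² − λ(λ−1)/cosh²(ζ)) · f(ζ) for every ζ ∈ ℝ; (ii) f(ζ) → 0 as ζ → −∞. (Note that e^{2ζ}/(1+e^{2ζ}) ∈ (0,1) for all real ζ, so the hypergeometric series converges.) -/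
open Filter

noncomputable def hgCoef (a b c : ℝ) (n : ℕ) : ℝ :=
  (ascPochhammer ℝ n).eval a * (ascPochhammer ℝ n).eval b /
    ((ascPochhammer ℝ n).eval c * n.factorial)

lemma pe_pos {c : ℝ} (hc : 1 ≤ c) (n : ℕ) : 0 < (ascPochhammer ℝ n).eval c := by
  induction n with
  | zero => simp
  | succ n ih =>
    rw [ascPochhammer_succ_eval]
    have : (0:ℝ) < c + n := by positivity
    positivity

lemma hgCoef_mul_succ {a b c : ℝ} (hc : 1 ≤ c) (n : ℕ) :
    hgCoef a b c (n + 1) * ((c + n) * (n + 1)) = hgCoef a b c n * ((a + n) * (b + n)) := by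
  have h1 : (0:ℝ) < (ascPochhammer ℝ n).eval c := pe_pos hc n
  have h2 : (0:ℝ) < c + n := by positivity
  have h3 : ((n.factorial : ℝ)) ≠ 0 := by positivity
  simp only [hgCoef, ascPochhammer_succ_eval, Nat.factorial_succ, Nat.cast_mul]
  field_simp
  push_cast
  ring

lemma div_succ_tendsto (a : ℝ) : Tendsto (fun n : ℕ => |a + n| / (n + 1)) atTop (nhds 1) := by
  have h0 : Tendsto (fun n : ℕ => 1 / ((n:ℝ) + 1)) atTop (nhds 0) :=
    tendsto_one_div_add_atTop_nhds_zero_nat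
  have h1 : Tendsto (fun n : ℕ => (a + n) / ((n:ℝ) + 1)) atTop (nhds 1) := by
    have : Tendsto (fun n : ℕ => 1 + (a - 1) * (1 / ((n:ℝ) + 1))) atTop (nhds (1 + (a-1)*0)) :=
      tendsto_const_nhds.add (h0.const_mul _)
    simp only [mul_zero, add_zero] at this
    refine this.congr fun n => ?_
    have : ((n:ℝ) + 1) ≠ 0 := by positivity
    field_simp; ring
  have := h1.abs
  simp only [abs_one] at this
  refine this.congr fun n => ?_
  rw [abs_div, abs_of_pos (by positivity : (0:ℝ) < (n:ℝ)+1)]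

lemma div_shift_tendsto {c : ℝ} (hc : 1 ≤ c) (b : ℝ) :
    Tendsto (fun n : ℕ => |b + n| / (c + n)) atTop (nhds 1) := by
  have hpos : ∀ n : ℕ, (0:ℝ) < c + n := fun n => by positivity
  have h0 : Tendsto (fun n : ℕ => (c + (n:ℝ))⁻¹) atTop (nhds 0) := by
    have : Tendsto (fun n : ℕ => c + (n:ℝ)) atTop atTop :=
      tendsto_atTop_add_const_left _ _ tendsto_natCast_atTop_atTop
    exact this.inv_tendsto_atTop
  have h1 : Tendsto (fun n : ℕ => (b + n) / (c + (n:ℝ))) atTop (nhds 1) := by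
    have : Tendsto (fun n : ℕ => 1 + (b - c) * (c + (n:ℝ))⁻¹) atTop (nhds (1 + (b-c)*0)) :=
      tendsto_const_nhds.add (h0.const_mul _)
    simp only [mul_zero, add_zero] at this
    refine this.congr fun n => ?_
    have := (hpos n).ne'
    field_simp; ring
  have := h1.abs
  simp only [abs_one] at this
  refine this.congr fun n => ?_
  rw [abs_div, abs_of_pos (hpos n)]

/-- master summability -/
lemma summable_master {a b c : ℝ} (hc : 1 ≤ c) (j : ℕ) {r : ℝ} (hr0 : 0 < r) (hr1 : r < 1) :
    Summable (fun n : ℕ => |hgCoef a b c n| * (n + 1) ^ j * r ^ n) := by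
  set q : ℝ := (1 + r) / 2 with hq
  have hq1 : q < 1 := by rw [hq]; linarith
  have hrq : r < q := by rw [hq]; linarith
  -- the ratio
  set ρ : ℕ → ℝ := fun n =>
    (|a + n| / (n + 1)) * (|b + n| / (c + n)) * (((n:ℝ) + 2) / (n + 1)) ^ j * r with hρ
  have hρt : Tendsto ρ atTop (nhds r) := by
    have h3 : Tendsto (fun n : ℕ => (((n:ℝ) + 2) / (n + 1)) ^ j) atTop (nhds 1) := by
      have := (div_succ_tendsto 2).pow j
      simp only [one_pow] at this
      refine this.congr fun n => ?_
      congr 2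
      rw [abs_of_pos (by positivity : (0:ℝ) < 2 + n)]
      ring
    have := (((div_succ_tendsto a).mul (div_shift_tendsto hc b)).mul h3).mul
      (tendsto_const_nhds (x := r))
    simpa using this
  apply summable_of_ratio_norm_eventually_le hq1
  filter_upwards [hρt.eventually_le_const hrq] with n hn
  have hpos1 : (0:ℝ) < (n:ℝ) + 1 := by positivity
  have hpos2 : (0:ℝ) < c + n := by positivity
  have key : |hgCoef a b c (n+1)| * ((c + n) * (n + 1)) = |hgCoef a b c n| * (|a + n| * |b + n|) := by
    have := congrArg abs (hgCoef_mul_succ (a:=a) (b:=b) hc n)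
    rw [abs_mul, abs_mul, abs_mul, abs_mul,
      abs_of_pos hpos2, abs_of_pos hpos1] at this
    simpa [abs_mul] using this
  have hnn : (0:ℝ) ≤ |hgCoef a b c n| * (n + 1) ^ j * r ^ n := by positivity
  rw [Real.norm_of_nonneg (by positivity), Real.norm_of_nonneg hnn]
  push_cast
  have step : |hgCoef a b c (n+1)| * ((n:ℝ)+1+1) ^ j * r ^ (n+1)
      = (|hgCoef a b c n| * (n + 1) ^ j * r ^ n) * ρ n := by
    rw [hρ]
    have e1 : |hgCoef a b c (n+1)| = |hgCoef a b c n| * (|a + n| * |b + n|) / ((c + n) * (n + 1)) := by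
      field_simp at key ⊢
      linarith [key]
    rw [e1]
    simp only [div_pow]
    field_simp
    ring
  calc |hgCoef a b c (n+1)| * ((n:ℝ)+1+1) ^ j * r ^ (n+1)
      = (|hgCoef a b c n| * (n + 1) ^ j * r ^ n) * ρ n := step
    _ ≤ (|hgCoef a b c n| * (n + 1) ^ j * r ^ n) * q := by
        apply mul_le_mul_of_nonneg_left hn hnn
    _ = q * (|hgCoef a b c n| * (n + 1) ^ j * r ^ n) := by ring

noncomputable def hgF (a b c z : ℝ) : ℝ := ∑' n : ℕ, hgCoef a b c n * z ^ n
noncomputable def hgF₁ (a b c z : ℝ) : ℝ := ∑' n : ℕ, hgCoef a b c n * n * z ^ (n - 1)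
noncomputable def hgF₂ (a b c z : ℝ) : ℝ :=
  ∑' n : ℕ, hgCoef a b c n * n * ((n - 1 : ℕ) : ℝ) * z ^ (n - 1 - 1)

section deriv
variable {a b c : ℝ} (hc : 1 ≤ c)

lemma summable_f0 {a b c z : ℝ} (hc : 1 ≤ c) (hz : |z| < 1) :
    Summable (fun n : ℕ => hgCoef a b c n * z ^ n) := by
  rcases lt_or_ge 0 (|z|) with h | h
  · apply Summable.of_norm
    refine Summable.of_nonneg_of_le (fun n => norm_nonneg _) (fun n => ?_)
      (summable_master (a:=a) (b:=b) hc 0 h hz)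
    simp [abs_mul, abs_pow]
  · have hz0 : z = 0 := by
      have := abs_nonneg z; have : |z| = 0 := le_antisymm h this; exact abs_eq_zero.mp this
    subst hz0
    apply summable_of_ne_finset_zero (s := {0})
    intro n hn
    simp at hn
    simp [zero_pow hn]

lemma summable_f1 {a b c z : ℝ} (hc : 1 ≤ c) (hz : |z| < 1) :
    Summable (fun n : ℕ => hgCoef a b c n * n * z ^ (n - 1)) := by
  set r : ℝ := (|z| + 1) / 2 with hr
  have hr0 : 0 < r := by positivity
  have hr1 : r < 1 := by rw [hr]; linarith
  have hzr : |z| < r := by rw [hr]; linarith [abs_nonneg z]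
  apply Summable.of_norm
  refine Summable.of_nonneg_of_le (fun n => norm_nonneg _) (fun n => ?_)
    (((summable_master (a:=a) (b:=b) hc 1 hr0 hr1).mul_left (1/r)))
  match n with
  | 0 => simpa using by positivity
  | (m+1) =>
    simp only [Nat.add_sub_cancel, norm_mul, Real.norm_eq_abs, abs_pow, pow_one]
    have h1 : |z| ^ m ≤ r ^ m := pow_le_pow_left₀ (abs_nonneg z) hzr.le m
    have h2 : |(((m:ℝ)+1))| = (m:ℝ)+1 := abs_of_pos (by positivity)
    push_cast
    rw [h2]
    have : |hgCoef a b c (m+1)| * ((m:ℝ) + 1) * |z| ^ m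
        ≤ |hgCoef a b c (m+1)| * ((m:ℝ) + 1 + 1) * r ^ m := by
      have hA : (0:ℝ) ≤ |hgCoef a b c (m+1)| * ((m:ℝ)+1) := by positivity
      have t1 := mul_le_mul_of_nonneg_left h1 hA
      have t2 : (0:ℝ) ≤ |hgCoef a b c (m+1)| * r ^ m := by positivity
      nlinarith [t1, t2]
    calc |hgCoef a b c (m+1)| * ((m:ℝ) + 1) * |z| ^ m
        ≤ |hgCoef a b c (m+1)| * ((m:ℝ) + 1 + 1) * r ^ m := this
      _ = 1/r * (|hgCoef a b c (m+1)| * ((m:ℝ) + 1 + 1) * r ^ (m+1)) := by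
          field_simp; ring

lemma summable_f2 {a b c z : ℝ} (hc : 1 ≤ c) (hz : |z| < 1) :
    Summable (fun n : ℕ => hgCoef a b c n * n * ((n - 1 : ℕ) : ℝ) * z ^ (n - 1 - 1)) := by
  set r : ℝ := (|z| + 1) / 2 with hr
  have hr0 : 0 < r := by positivity
  have hr1 : r < 1 := by rw [hr]; linarith
  have hzr : |z| < r := by rw [hr]; linarith [abs_nonneg z]
  apply Summable.of_norm
  refine Summable.of_nonneg_of_le (fun n => norm_nonneg _) (fun n => ?_)
    (((summable_master (a:=a) (b:=b) hc 2 hr0 hr1).mul_left (1/r^2)))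
  match n with
  | 0 => simpa using by positivity
  | 1 => simpa using by positivity
  | (m+2) =>
    simp only [norm_mul, Real.norm_eq_abs, abs_pow, Nat.add_sub_cancel]
    have h1 : |z| ^ m ≤ r ^ m := pow_le_pow_left₀ (abs_nonneg z) hzr.le m
    have e0 : ((m:ℕ)+2-1 : ℕ) = m + 1 := rfl
    rw [e0]
    push_cast
    rw [abs_of_pos (by positivity : (0:ℝ) < (m:ℝ)+2), abs_of_pos (by positivity : (0:ℝ) < (m:ℝ)+1)]
    have hA : (0:ℝ) ≤ |hgCoef a b c (m+2)| * (((m:ℝ)+2) * ((m:ℝ)+1)) := by positivity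
    have t1 := mul_le_mul_of_nonneg_left h1 hA
    have t2 : (0:ℝ) ≤ |hgCoef a b c (m+2)| * r ^ m := by positivity
    have goal2 : |hgCoef a b c (m+2)| * ((m:ℝ)+2) * ((m:ℝ)+1) * r ^ m
        ≤ 1/r^2 * (|hgCoef a b c (m+2)| * ((m:ℝ)+2+1)^2 * r ^ (m+2)) := by
      have e1 : 1/r^2 * (|hgCoef a b c (m+2)| * ((m:ℝ)+2+1)^2 * r ^ (m+2))
          = |hgCoef a b c (m+2)| * ((m:ℝ)+3)^2 * r ^ m := by
        field_simp; ring
      rw [e1]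
      nlinarith [t2]
    calc |hgCoef a b c (m+2)| * ((m:ℝ)+2) * ((m:ℝ)+1) * |z| ^ m
        ≤ |hgCoef a b c (m+2)| * ((m:ℝ)+2) * ((m:ℝ)+1) * r ^ m := by nlinarith [t1]
      _ ≤ _ := goal2

lemma hasDerivAt_hgF {a b c z : ℝ} (hc : 1 ≤ c) (hz : |z| < 1) :
    HasDerivAt (hgF a b c) (hgF₁ a b c z) z := by
  set r : ℝ := (|z| + 1) / 2 with hr
  have hr0 : 0 < r := by positivity
  have hr1 : r < 1 := by rw [hr]; linarith
  have hzr : |z| < r := by rw [hr]; linarith [abs_nonneg z]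
  have hu : Summable (fun n : ℕ => (|hgCoef a b c n| * ((n:ℝ)+1) ^ 1 * r ^ n) / r) :=
    (summable_master (a:=a) (b:=b) hc 1 hr0 hr1).div_const r
  have hbound : ∀ (n : ℕ) (w : ℝ), w ∈ Metric.ball (0:ℝ) r →
      ‖hgCoef a b c n * ((n:ℝ) * w ^ (n - 1))‖
        ≤ (|hgCoef a b c n| * ((n:ℝ)+1) ^ 1 * r ^ n) / r := by
    intro n w hw
    rw [Metric.mem_ball, Real.dist_eq, sub_zero] at hw
    match n with
    | 0 => simpa using by positivity
    | (m+1) =>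
      simp only [Nat.add_sub_cancel, Real.norm_eq_abs, abs_mul, abs_pow, pow_one]
      push_cast
      rw [abs_of_pos (by positivity : (0:ℝ) < (m:ℝ)+1)]
      have h1 : |w| ^ m ≤ r ^ m := pow_le_pow_left₀ (abs_nonneg w) hw.le m
      have e1 : |hgCoef a b c (m+1)| * (((m:ℝ)+1) + 1) * r ^ (m+1) / r
          = |hgCoef a b c (m+1)| * (((m:ℝ)+1) + 1) * r ^ m := by
        field_simp; ring
      rw [e1]
      have hA : (0:ℝ) ≤ |hgCoef a b c (m+1)| * ((m:ℝ)+1) := by positivity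
      have t1 := mul_le_mul_of_nonneg_left h1 hA
      have t2 : (0:ℝ) ≤ |hgCoef a b c (m+1)| * r ^ m := by positivity
      nlinarith [t1, t2]
  have hsum0 : Summable (fun n : ℕ => hgCoef a b c n * (0:ℝ) ^ n) := by
    apply summable_of_ne_finset_zero (s := ({0} : Finset ℕ))
    intro n hn
    simp only [Finset.mem_singleton] at hn
    simp [zero_pow hn]
  have hder := hasDerivAt_tsum_of_isPreconnected hu Metric.isOpen_ball
    (convex_ball (0:ℝ) r).isPreconnected
    (fun n w _ => (hasDerivAt_pow n w).const_mul (hgCoef a b c n))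
    hbound (Metric.mem_ball_self hr0) hsum0
    (by rwa [Metric.mem_ball, Real.dist_eq, sub_zero])
  have e : (∑' n : ℕ, hgCoef a b c n * ((n:ℝ) * z ^ (n - 1))) = hgF₁ a b c z :=
    tsum_congr fun n => by rw [mul_assoc]
  rw [e] at hder
  exact hder

lemma hasDerivAt_hgF₁ {a b c z : ℝ} (hc : 1 ≤ c) (hz : |z| < 1) :
    HasDerivAt (hgF₁ a b c) (hgF₂ a b c z) z := by
  set r : ℝ := (|z| + 1) / 2 with hr
  have hr0 : 0 < r := by positivity
  have hr1 : r < 1 := by rw [hr]; linarith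
  have hzr : |z| < r := by rw [hr]; linarith [abs_nonneg z]
  have hu : Summable (fun n : ℕ => (|hgCoef a b c n| * ((n:ℝ)+1) ^ 2 * r ^ n) / r ^ 2) :=
    (summable_master (a:=a) (b:=b) hc 2 hr0 hr1).div_const _
  have hbound : ∀ (n : ℕ) (w : ℝ), w ∈ Metric.ball (0:ℝ) r →
      ‖hgCoef a b c n * (n:ℝ) * (((n-1:ℕ):ℝ) * w ^ (n - 1 - 1))‖
        ≤ (|hgCoef a b c n| * ((n:ℝ)+1) ^ 2 * r ^ n) / r ^ 2 := by
    intro n w hw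
    rw [Metric.mem_ball, Real.dist_eq, sub_zero] at hw
    match n with
    | 0 => simpa using by positivity
    | 1 => simpa using by positivity
    | (m+2) =>
      have e0 : ((m:ℕ)+2-1 : ℕ) = m + 1 := rfl
      simp only [e0, Nat.add_sub_cancel, Real.norm_eq_abs, abs_mul, abs_pow]
      push_cast
      rw [abs_of_pos (by positivity : (0:ℝ) < (m:ℝ)+2),
        abs_of_pos (by positivity : (0:ℝ) < (m:ℝ)+1)]
      have h1 : |w| ^ m ≤ r ^ m := pow_le_pow_left₀ (abs_nonneg w) hw.le m
      have e1 : |hgCoef a b c (m+2)| * (((m:ℝ)+2) + 1) ^ 2 * r ^ (m+2) / r ^ 2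
          = |hgCoef a b c (m+2)| * ((m:ℝ)+3) ^ 2 * r ^ m := by
        field_simp; ring
      rw [e1]
      have hA : (0:ℝ) ≤ |hgCoef a b c (m+2)| * (((m:ℝ)+2) * ((m:ℝ)+1)) := by positivity
      have t1 := mul_le_mul_of_nonneg_left h1 hA
      have t2 : (0:ℝ) ≤ |hgCoef a b c (m+2)| * r ^ m := by positivity
      nlinarith [t1, t2]
  have hsum0 : Summable (fun n : ℕ => hgCoef a b c n * (n:ℝ) * (0:ℝ) ^ (n-1)) := by
    apply summable_of_ne_finset_zero (s := ({0, 1} : Finset ℕ))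
    intro n hn
    simp only [Finset.mem_insert, Finset.mem_singleton] at hn
    push_neg at hn
    have : n - 1 ≠ 0 := by omega
    simp [zero_pow this]
  have hder := hasDerivAt_tsum_of_isPreconnected hu Metric.isOpen_ball
    (convex_ball (0:ℝ) r).isPreconnected
    (fun n w _ => (hasDerivAt_pow (n-1) w).const_mul (hgCoef a b c n * (n:ℝ)))
    hbound (Metric.mem_ball_self hr0) hsum0
    (by rwa [Metric.mem_ball, Real.dist_eq, sub_zero])
  have e : (∑' n : ℕ, hgCoef a b c n * (n:ℝ) * (((n-1:ℕ):ℝ) * z ^ (n - 1 - 1)))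
      = hgF₂ a b c z := tsum_congr fun n => by ring
  rw [e] at hder
  exact hder

lemma hg_ode {a b c z : ℝ} (hc : 1 ≤ c) (hz : |z| < 1) :
    z * (1 - z) * hgF₂ a b c z + (c - (a + b + 1) * z) * hgF₁ a b c z
      - a * b * hgF a b c z = 0 := by
  set Q : ℕ → ℝ := fun n => hgCoef a b c n * n * (c + n - 1) * z ^ (n - 1) with hQ
  set P : ℕ → ℝ := fun n =>
    z * (1 - z) * (hgCoef a b c n * n * ((n - 1 : ℕ) : ℝ) * z ^ (n - 1 - 1))
      + (c - (a + b + 1) * z) * (hgCoef a b c n * n * z ^ (n - 1))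
      - a * b * (hgCoef a b c n * z ^ n) with hP
  have hS : HasSum P (z * (1 - z) * hgF₂ a b c z + (c - (a + b + 1) * z) * hgF₁ a b c z
      - a * b * hgF a b c z) := by
    exact (((summable_f2 hc hz).hasSum.mul_left (z * (1-z))).add
      ((summable_f1 hc hz).hasSum.mul_left (c - (a+b+1)*z))).sub
      ((summable_f0 hc hz).hasSum.mul_left (a*b))
  have hPQ : ∀ n : ℕ, P n = Q n - Q (n + 1) := by
    intro n
    match n with
    | 0 =>
      have h := hgCoef_mul_succ (a:=a) (b:=b) hc 0
      simp only [hP, hQ]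
      push_cast at h ⊢
      ring_nf
      ring_nf at h
      linarith [h]
    | 1 =>
      have h := hgCoef_mul_succ (a:=a) (b:=b) hc 1
      simp only [hP, hQ]
      norm_num
      push_cast at h ⊢
      linear_combination z * h
    | (m+2) =>
      have h := hgCoef_mul_succ (a:=a) (b:=b) hc (m+2)
      simp only [hP, hQ]
      simp only [show (m + 2 - 1 : ℕ) = m + 1 from rfl, show (m + 1 - 1 : ℕ) = m from rfl,
        show (m + 2 + 1 - 1 : ℕ) = m + 2 from rfl]
      push_cast at h ⊢
      linear_combination (z ^ (m+2)) * h
  have hQ0 : Q 0 = 0 := by simp [hQ]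
  have hQlim : Filter.Tendsto Q Filter.atTop (nhds 0) := by
    rcases eq_or_ne z 0 with rfl | hz0
    · refine Filter.Tendsto.congr' ?_ (tendsto_const_nhds (x := (0:ℝ)))
      filter_upwards [Filter.eventually_ge_atTop 2] with n hn
      have : n - 1 ≠ 0 := by omega
      simp [hQ, zero_pow this]
    · have habs : 0 < |z| := abs_pos.mpr hz0
      have hmaster := summable_master (a:=a) (b:=b) hc 2 habs hz
      have hterm : Filter.Tendsto
          (fun n : ℕ => ((c+1)/|z|) * (|hgCoef a b c n| * ((n:ℝ)+1) ^ 2 * |z| ^ n))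
          Filter.atTop (nhds (((c+1)/|z|) * 0)) :=
        (hmaster.tendsto_atTop_zero).const_mul _
      rw [mul_zero] at hterm
      rw [show (0:ℝ) = |(0:ℝ)| by simp] at hterm
      apply tendsto_zero_iff_norm_tendsto_zero.mpr
      simp only [Real.norm_eq_abs]
      apply squeeze_zero (fun n => abs_nonneg _) _ (by simpa using hterm)
      intro n
      have hcn1 : (0:ℝ) ≤ c + n - 1 := by
        have : (0:ℝ) ≤ (n:ℝ) := Nat.cast_nonneg n
        linarith
      have e : |Q n| = |hgCoef a b c n| * n * (c + n - 1) * |z| ^ (n-1) := by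
        simp only [hQ, abs_mul, abs_pow]
        rw [abs_of_nonneg (Nat.cast_nonneg n : (0:ℝ) ≤ n), abs_of_nonneg hcn1]
      rw [e]
      match n with
      | 0 => simp; positivity
      | (m+1) =>
        simp only [Nat.add_sub_cancel]
        push_cast
        have hzm : |z| ^ (m+1) = |z| ^ m * |z| := pow_succ _ _
        have key : ((m:ℝ)+1) * (c + ((m:ℝ)+1) - 1) ≤ (c+1) * (((m:ℝ)+1)+1) ^ 2 := by
          nlinarith [Nat.cast_nonneg m (α := ℝ), sq_nonneg ((m:ℝ)+1),
            mul_nonneg (sub_nonneg.mpr hc) (sq_nonneg ((m:ℝ)+1)), sq_nonneg (m:ℝ)]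
        have hAz : (0:ℝ) ≤ |hgCoef a b c (m+1)| * |z| ^ m := by positivity
        have main : |hgCoef a b c (m+1)| * ((m:ℝ)+1) * (c + ((m:ℝ)+1) - 1) * |z| ^ m
            ≤ |hgCoef a b c (m+1)| * ((c+1) * (((m:ℝ)+1)+1) ^ 2) * |z| ^ m := by
          nlinarith [mul_le_mul_of_nonneg_left key hAz]
        have e2 : (c+1)/|z| * (|hgCoef a b c (m+1)| * (((m:ℝ)+1)+1) ^ 2 * |z| ^ (m+1))
            = |hgCoef a b c (m+1)| * ((c+1) * (((m:ℝ)+1)+1) ^ 2) * |z| ^ m := by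
          rw [hzm]; field_simp
        rw [e2]
        exact main
  have hpart : ∀ N : ℕ, ∑ i ∈ Finset.range N, P i = Q 0 - Q N := by
    intro N
    rw [Finset.sum_congr rfl (fun i _ => hPQ i)]
    exact Finset.sum_range_sub' Q N
  have h1 : Filter.Tendsto (fun N => ∑ i ∈ Finset.range N, P i) Filter.atTop
      (nhds (z * (1 - z) * hgF₂ a b c z + (c - (a + b + 1) * z) * hgF₁ a b c z
        - a * b * hgF a b c z)) := hS.tendsto_sum_nat
  have h2 : Filter.Tendsto (fun N => ∑ i ∈ Finset.range N, P i) Filter.atTop (nhds 0) := by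
    simp only [hpart, hQ0, zero_sub]
    simpa using hQlim.neg
  exact tendsto_nhds_unique h1 h2

end deriv

noncomputable def sig (ζ : ℝ) : ℝ := Real.exp (2 * ζ) / (1 + Real.exp (2 * ζ))

lemma sig_pos (ζ : ℝ) : 0 < sig ζ := by
  have h := Real.exp_pos (2 * ζ)
  unfold sig; positivity

lemma sig_lt_one (ζ : ℝ) : sig ζ < 1 := by
  have h := Real.exp_pos (2 * ζ)
  rw [sig, div_lt_one (by linarith)]
  linarith

lemma abs_sig_lt (ζ : ℝ) : |sig ζ| < 1 := by
  rw [abs_of_pos (sig_pos ζ)]; exact sig_lt_one ζ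

lemma hasDerivAt_sig (ζ : ℝ) : HasDerivAt sig (2 * sig ζ * (1 - sig ζ)) ζ := by
  have h := Real.exp_pos (2 * ζ)
  have hne : (1 : ℝ) + Real.exp (2 * ζ) ≠ 0 := by linarith
  have hu : HasDerivAt (fun ζ : ℝ => Real.exp (2 * ζ)) (Real.exp (2 * ζ) * 2) ζ := by
    simpa using ((hasDerivAt_id ζ).const_mul 2).exp
  have hv : HasDerivAt (fun ζ : ℝ => 1 + Real.exp (2 * ζ)) (Real.exp (2 * ζ) * 2) ζ := by
    exact hu.const_add 1
  have := hu.div hv hne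
  refine this.congr_deriv ?_
  rw [sig]
  field_simp

lemma one_div_cosh_sq (ζ : ℝ) : 1 / Real.cosh ζ ^ 2 = 4 * sig ζ * (1 - sig ζ) := by
  have he : Real.exp ζ ≠ 0 := (Real.exp_pos ζ).ne'
  have hch : (0:ℝ) < Real.cosh ζ := Real.cosh_pos ζ
  have h2 : Real.exp (2 * ζ) = Real.exp ζ ^ 2 := by
    rw [two_mul, Real.exp_add]; ring
  have hne : (1 : ℝ) + Real.exp (2 * ζ) ≠ 0 := by
    have := Real.exp_pos (2 * ζ); linarith
  rw [sig, Real.cosh_eq, Real.exp_neg] at *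
  rw [h2] at hne ⊢
  field_simp
  ring

/-- The Gauss hypergeometric function `₂F₁(a, b; c; z)`, defined (for `|z| < 1`) by its
power series `∑ₙ ((a)ₙ (b)ₙ / (c)ₙ) · zⁿ/n!`, where `(x)ₙ` is the Pochhammer symbol. -/
noncomputable def gaussHypergeom (a b c z : ℝ) : ℝ :=
  ∑' n : ℕ,
    ((ascPochhammer ℝ n).eval a * (ascPochhammer ℝ n).eval b /
      (ascPochhammer ℝ n).eval c) * z ^ n / n.factorial

lemma gauss_eq_hgF (a b c z : ℝ) : gaussHypergeom a b c z = hgF a b c z := by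
  rw [gaussHypergeom, hgF]
  exact tsum_congr fun n => by rw [hgCoef]; ring

/-- For `k > 0` and `λ ∈ ℝ`, the function
`f(ζ) = e^{kζ} · ₂F₁(λ, 1−λ; 1+k; e^{2ζ}/(1+e^{2ζ}))` is twice differentiable on `ℝ`,
satisfies the Schrödinger equation with Pöschl–Teller potential
`f'' = (k² − λ(λ−1)/cosh²ζ) f`, and tends to `0` as `ζ → −∞`. -/
theorem poeschlTeller_solution_halfline (k lam : ℝ) (hk : 0 < k) :
    let f : ℝ → ℝ := fun ζ =>
      Real.exp (k * ζ) *
        gaussHypergeom lam (1 - lam) (1 + k) (Real.exp (2 * ζ) / (1 + Real.exp (2 * ζ)))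
    (Differentiable ℝ f ∧ Differentiable ℝ (deriv f) ∧
      ∀ ζ : ℝ, deriv (deriv f) ζ =
        (k ^ 2 - lam * (lam - 1) / Real.cosh ζ ^ 2) * f ζ) ∧
    Filter.Tendsto f Filter.atBot (nhds 0) := by
  intro f
  set a : ℝ := lam with ha
  set b : ℝ := 1 - lam with hb
  set c : ℝ := 1 + k with hcdef
  have hc : 1 ≤ c := by rw [hcdef]; linarith
  have hfeq : f = fun ζ => Real.exp (k * ζ) * hgF a b c (sig ζ) := by
    funext ζ
    show Real.exp (k * ζ) * gaussHypergeom a b c (sig ζ) = _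
    rw [gauss_eq_hgF]
  -- first derivative
  have hfd : ∀ ζ : ℝ, HasDerivAt f
      (Real.exp (k * ζ) * k * hgF a b c (sig ζ)
        + Real.exp (k * ζ) * (hgF₁ a b c (sig ζ) * (2 * sig ζ * (1 - sig ζ)))) ζ := by
    intro ζ
    rw [hfeq]
    have hE : HasDerivAt (fun ζ : ℝ => Real.exp (k * ζ)) (Real.exp (k * ζ) * k) ζ := by
      simpa using ((hasDerivAt_id ζ).const_mul k).exp
    have hFc : HasDerivAt (fun ζ : ℝ => hgF a b c (sig ζ))
        (hgF₁ a b c (sig ζ) * (2 * sig ζ * (1 - sig ζ))) ζ := by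
      exact
        (hasDerivAt_hgF hc (abs_sig_lt ζ)).comp ζ (hasDerivAt_sig ζ)
    exact hE.mul hFc
  set g : ℝ → ℝ := fun ζ =>
      Real.exp (k * ζ) * k * hgF a b c (sig ζ)
        + Real.exp (k * ζ) * (hgF₁ a b c (sig ζ) * (2 * sig ζ * (1 - sig ζ))) with hg
  have hderivf : deriv f = g := funext fun ζ => (hfd ζ).deriv
  -- second derivative
  have hgd : ∀ ζ : ℝ, HasDerivAt g
      ((Real.exp (k * ζ) * k * k) * hgF a b c (sig ζ)
        + (Real.exp (k * ζ) * k) * (hgF₁ a b c (sig ζ) * (2 * sig ζ * (1 - sig ζ)))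
        + (Real.exp (k * ζ) * k * (hgF₁ a b c (sig ζ) * (2 * sig ζ * (1 - sig ζ)))
          + Real.exp (k * ζ) *
            ((hgF₂ a b c (sig ζ) * (2 * sig ζ * (1 - sig ζ))) * (2 * sig ζ * (1 - sig ζ))
              + hgF₁ a b c (sig ζ) *
                (2 * (2 * sig ζ * (1 - sig ζ)) * (1 - sig ζ)
                  + 2 * sig ζ * (0 - (2 * sig ζ * (1 - sig ζ))))))) ζ := by
    intro ζ
    have hE : HasDerivAt (fun ζ : ℝ => Real.exp (k * ζ)) (Real.exp (k * ζ) * k) ζ := by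
      simpa using ((hasDerivAt_id ζ).const_mul k).exp
    have hEk : HasDerivAt (fun ζ : ℝ => Real.exp (k * ζ) * k) (Real.exp (k * ζ) * k * k) ζ :=
      hE.mul_const k
    have hFc : HasDerivAt (fun ζ : ℝ => hgF a b c (sig ζ))
        (hgF₁ a b c (sig ζ) * (2 * sig ζ * (1 - sig ζ))) ζ := by
      exact
        (hasDerivAt_hgF hc (abs_sig_lt ζ)).comp ζ (hasDerivAt_sig ζ)
    have hF1c : HasDerivAt (fun ζ : ℝ => hgF₁ a b c (sig ζ))
        (hgF₂ a b c (sig ζ) * (2 * sig ζ * (1 - sig ζ))) ζ := by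
      exact
        (hasDerivAt_hgF₁ hc (abs_sig_lt ζ)).comp ζ (hasDerivAt_sig ζ)
    have hsd : HasDerivAt (fun ζ : ℝ => 2 * sig ζ * (1 - sig ζ))
        (2 * (2 * sig ζ * (1 - sig ζ)) * (1 - sig ζ)
          + 2 * sig ζ * (0 - (2 * sig ζ * (1 - sig ζ)))) ζ :=
      (((hasDerivAt_sig ζ).const_mul 2).mul ((hasDerivAt_const ζ 1).sub (hasDerivAt_sig ζ)))
    exact (hEk.mul hFc).add (hE.mul (hF1c.mul hsd))
  refine ⟨⟨fun ζ => (hfd ζ).differentiableAt, ?_, ?_⟩, ?_⟩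
  · rw [hderivf]; exact fun ζ => (hgd ζ).differentiableAt
  · intro ζ
    rw [hderivf, (hgd ζ).deriv]
    have hode := hg_ode (a := a) (b := b) (c := c) hc (abs_sig_lt ζ)
    have hcosh := one_div_cosh_sq ζ
    have hchne : Real.cosh ζ ^ 2 ≠ 0 := by positivity
    have hfv : f ζ = Real.exp (k * ζ) * hgF a b c (sig ζ) := by rw [hfeq]
    rw [hfv, div_eq_mul_one_div, hcosh]
    have habc : a + b + 1 = 2 := by rw [ha, hb]; ring
    rw [habc] at hode
    linear_combination (4 * Real.exp (k * ζ) * sig ζ * (1 - sig ζ)) * hode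
  · -- tendsto
    rw [hfeq]
    have hE0 : Filter.Tendsto (fun ζ : ℝ => Real.exp (k * ζ)) Filter.atBot (nhds 0) := by
      apply Real.tendsto_exp_atBot.comp
      exact (Filter.tendsto_id (α := ℝ) (x := Filter.atBot)).const_mul_atBot hk
    have hsig0 : Filter.Tendsto sig Filter.atBot (nhds 0) := by
      have hx0 : Filter.Tendsto (fun ζ : ℝ => Real.exp (2 * ζ)) Filter.atBot (nhds 0) := by
        apply Real.tendsto_exp_atBot.comp
        exact (Filter.tendsto_id (α := ℝ) (x := Filter.atBot)).const_mul_atBot (by norm_num)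
      have hcont : ContinuousAt (fun x : ℝ => x / (1 + x)) 0 :=
        continuousAt_id.div (continuousAt_const.add continuousAt_id) (by norm_num)
      have := hcont.tendsto.comp hx0
      rw [zero_div] at this
      exact this
    have hFcont : ContinuousAt (hgF a b c) 0 :=
      (hasDerivAt_hgF (a := a) (b := b) hc (by norm_num : |(0:ℝ)| < 1)).continuousAt
    have := hE0.mul (hFcont.tendsto.comp hsig0)
    simpa using this
end

section
/- Let k, λ ∈ ℝ and set a = (λ−k)/2, b = (λ+k)/2. Define Υ_e(ζ) = (cosh ζ)^λ · ₂F₁(a, b; 1/2; −sinh²(ζ)). Then for every ζ ∈ ℝ with |sinh ζ| < 1 (so that the hypergeometric series converges at the argument −sinh²ζ), Υ_e is twice differentiable at ζ and satisfies Υ_e''(ζ) = (k² − λ(λ−1)/cosh²(ζ)) · Υ_e(ζ). -/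
open Filter Topology
open scoped ENNReal NNReal

namespace PTaux

/-- The coefficients of the `₂F₁(a,b;1/2;·)` series. -/
noncomputable def cg (a b : ℝ) (n : ℕ) : ℝ :=
  (ascPochhammer ℝ n).eval a * (ascPochhammer ℝ n).eval b /
    (ascPochhammer ℝ n).eval (1 / 2 : ℝ) / n.factorial

noncomputable def c1 (a b : ℝ) (n : ℕ) : ℝ := ((n : ℝ) + 1) * cg a b (n + 1)

noncomputable def c2 (a b : ℝ) (n : ℕ) : ℝ := ((n : ℝ) + 1) * c1 a b (n + 1)

noncomputable def Fg (a b : ℝ) (x : ℝ) : ℝ := ∑' n : ℕ, cg a b n * x ^ n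

noncomputable def F1 (a b : ℝ) (x : ℝ) : ℝ := ∑' n : ℕ, c1 a b n * x ^ n

noncomputable def F2 (a b : ℝ) (x : ℝ) : ℝ := ∑' n : ℕ, c2 a b n * x ^ n

lemma gauss_eq (a b z : ℝ) : gaussHypergeom a b (1 / 2) z = Fg a b z := by
  unfold gaussHypergeom Fg cg
  refine tsum_congr fun n => ?_
  rw [mul_div_right_comm]

lemma cg_rec (a b : ℝ) (n : ℕ) :
    cg a b (n + 1) * (((n : ℝ) + 1 / 2) * ((n : ℝ) + 1)) =
      cg a b n * ((a + n) * (b + n)) := by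
  have hc : (ascPochhammer ℝ n).eval (1 / 2 : ℝ) ≠ 0 :=
    (ascPochhammer_pos n (1 / 2 : ℝ) (by norm_num)).ne'
  have hf : (n.factorial : ℝ) ≠ 0 := Nat.cast_ne_zero.2 n.factorial_ne_zero
  have h2 : (1 / 2 : ℝ) + n ≠ 0 := by positivity
  have hn1 : ((n : ℝ) + 1) ≠ 0 := by positivity
  unfold cg
  rw [ascPochhammer_succ_eval, ascPochhammer_succ_eval, ascPochhammer_succ_eval,
    Nat.factorial_succ]
  push_cast
  field_simp
  ring

lemma c1_rec (a b : ℝ) (n : ℕ) :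
    c1 a b (n + 1) * (((n : ℝ) + 1) * ((n : ℝ) + 3 / 2)) =
      c1 a b n * ((a + 1 + n) * (b + 1 + n)) := by
  have h := cg_rec a b (n + 1)
  simp only [c1]
  push_cast at h ⊢
  linear_combination ((n : ℝ) + 1) * h

lemma c2_rec (a b : ℝ) (n : ℕ) :
    c2 a b (n + 1) * (((n : ℝ) + 1) * ((n : ℝ) + 5 / 2)) =
      c2 a b n * ((a + 2 + n) * (b + 2 + n)) := by
  have h := c1_rec a b (n + 1)
  simp only [c2]
  push_cast at h ⊢
  linear_combination ((n : ℝ) + 1) * h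

/-- The absolute ratio of successive coefficients tends to `1`. -/
lemma tendsto_ratio (A B C D : ℝ) (hC : 0 < C) (hD : 0 < D) :
    Tendsto (fun n : ℕ => |A + n| * |B + n| / (((n : ℝ) + C) * ((n : ℝ) + D)))
      atTop (𝓝 1) := by
  have key : ∀ E G : ℝ, 0 < G →
      Tendsto (fun n : ℕ => |(E + n) / ((n : ℝ) + G)|) atTop (𝓝 1) := by
    intro E G hG
    have hbase : Tendsto (fun n : ℕ => (E + n) / ((n : ℝ) + G)) atTop (𝓝 1) := by
      have h0 : Tendsto (fun n : ℕ => ((n : ℝ) + G)) atTop atTop :=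
        tendsto_atTop_add_const_right _ G tendsto_natCast_atTop_atTop
      have hinv : Tendsto (fun n : ℕ => ((n : ℝ) + G)⁻¹) atTop (𝓝 0) :=
        h0.inv_tendsto_atTop
      have h1 : Tendsto (fun n : ℕ => 1 + (E - G) * ((n : ℝ) + G)⁻¹) atTop
          (𝓝 (1 + (E - G) * 0)) := tendsto_const_nhds.add (hinv.const_mul _)
      rw [mul_zero, add_zero] at h1
      refine h1.congr fun n => ?_
      have hne : ((n : ℝ) + G) ≠ 0 := by positivity
      field_simp
      ring
    have habs := (continuous_abs.tendsto (1 : ℝ)).comp hbase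
    simpa [Function.comp_def] using habs
  have h1 := key A C hC
  have h2 := key B D hD
  have h := h1.mul h2
  rw [one_mul] at h
  refine h.congr fun n => ?_
  have hC' : (0 : ℝ) < (n : ℝ) + C := by positivity
  have hD' : (0 : ℝ) < (n : ℝ) + D := by positivity
  rw [abs_div, abs_div, abs_of_pos hC', abs_of_pos hD', div_mul_div_comm]

lemma abs_ratio_of_rec {d : ℕ → ℝ} {A B C D : ℝ} (hC : 0 < C) (hD : 0 < D)
    (hrec : ∀ n : ℕ, d (n + 1) * (((n : ℝ) + C) * ((n : ℝ) + D)) =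
      d n * ((A + n) * (B + n))) (n : ℕ) :
    |d (n + 1)| ≤ (|A + n| * |B + n| / (((n : ℝ) + C) * ((n : ℝ) + D))) * |d n| := by
  have hpos : (0 : ℝ) < ((n : ℝ) + C) * ((n : ℝ) + D) := by positivity
  rw [div_mul_eq_mul_div, le_div_iff₀ hpos]
  refine le_of_eq ?_
  calc |d (n + 1)| * (((n : ℝ) + C) * ((n : ℝ) + D))
      = |d (n + 1) * (((n : ℝ) + C) * ((n : ℝ) + D))| := by
        rw [abs_mul, abs_of_pos hpos]
    _ = |d n * ((A + n) * (B + n))| := by rw [hrec n]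
    _ = |A + n| * |B + n| * |d n| := by rw [abs_mul, abs_mul]; ring

lemma summable_abs_pow {c : ℕ → ℝ} {q : ℕ → ℝ}
    (hq : ∀ n, |c (n + 1)| ≤ q n * |c n|) (hq1 : Tendsto q atTop (𝓝 1))
    {ρ : ℝ} (h0 : 0 ≤ ρ) (h1 : ρ < 1) :
    Summable fun n => |c n| * ρ ^ n := by
  rcases eq_or_lt_of_le h0 with h | h
  · apply summable_of_ne_finset_zero (s := {0})
    intro n hn
    rw [Finset.mem_singleton] at hn
    rw [← h, zero_pow hn, mul_zero]
  · have hρr : ρ < (1 + ρ) / 2 := by linarith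
    have hr1 : (1 + ρ) / 2 < 1 := by linarith
    have ht : (1 : ℝ) < (1 + ρ) / 2 / ρ := (one_lt_div h).2 hρr
    have hev : ∀ᶠ n in atTop, q n < (1 + ρ) / 2 / ρ := hq1.eventually_lt_const ht
    apply summable_of_ratio_norm_eventually_le hr1
    filter_upwards [hev] with n hn
    have e1 : |c (n + 1)| * ρ ^ (n + 1) ≤ q n * |c n| * ρ ^ (n + 1) :=
      mul_le_mul_of_nonneg_right (hq n) (by positivity)
    have e2 : q n * |c n| * ρ ^ (n + 1) ≤ (1 + ρ) / 2 / ρ * |c n| * ρ ^ (n + 1) := by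
      have := mul_le_mul_of_nonneg_right
        (mul_le_mul_of_nonneg_right hn.le (abs_nonneg (c n)))
        (pow_nonneg h.le (n + 1))
      exact this
    have e3 : (1 + ρ) / 2 / ρ * |c n| * ρ ^ (n + 1) = (1 + ρ) / 2 * (|c n| * ρ ^ n) := by
      rw [pow_succ]
      field_simp
    have habs1 : (0 : ℝ) ≤ |c (n + 1)| * ρ ^ (n + 1) := by positivity
    have habs2 : (0 : ℝ) ≤ |c n| * ρ ^ n := by positivity
    rw [Real.norm_eq_abs, Real.norm_eq_abs, abs_of_nonneg habs1, abs_of_nonneg habs2]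
    linarith

lemma one_le_radius {c : ℕ → ℝ} {q : ℕ → ℝ}
    (hq : ∀ n, |c (n + 1)| ≤ q n * |c n|) (hq1 : Tendsto q atTop (𝓝 1)) :
    1 ≤ (FormalMultilinearSeries.ofScalars ℝ c).radius := by
  refine ENNReal.le_of_forall_nnreal_lt fun ρ hρ => ?_
  apply FormalMultilinearSeries.le_radius_of_summable_norm
  have hρ1 : (ρ : ℝ) < 1 := by exact_mod_cast hρ
  have hs := summable_abs_pow hq hq1 ρ.coe_nonneg hρ1
  refine hs.congr fun n => ?_
  rw [FormalMultilinearSeries.ofScalars_norm, Real.norm_eq_abs]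

lemma hasDerivAt_tsum_pow {c : ℕ → ℝ} {q : ℕ → ℝ}
    (hq : ∀ n, |c (n + 1)| ≤ q n * |c n|) (hq1 : Tendsto q atTop (𝓝 1))
    {x : ℝ} (hx : |x| < 1) :
    HasDerivAt (fun y => ∑' n : ℕ, c n * y ^ n)
      (∑' n : ℕ, (((n : ℝ) + 1) * c (n + 1)) * x ^ n) x := by
  set p := FormalMultilinearSeries.ofScalars ℝ c with hp
  have hrad : 1 ≤ p.radius := one_le_radius hq hq1
  have hpos : (0 : ℝ≥0∞) < p.radius := lt_of_lt_of_le zero_lt_one hrad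
  have hfun : (fun y : ℝ => ∑' n : ℕ, c n * y ^ n) = p.sum := by
    funext y
    rw [show p.sum y = FormalMultilinearSeries.ofScalarsSum c y from rfl,
      FormalMultilinearSeries.ofScalars_sum_eq]
    simp [smul_eq_mul]
  have hball : HasFPowerSeriesOnBall (fun y : ℝ => ∑' n : ℕ, c n * y ^ n) p 0 1 := by
    rw [hfun]
    exact (p.hasFPowerSeriesOnBall hpos).mono zero_lt_one hrad
  have hmem : x ∈ Metric.eball (0 : ℝ) 1 := by
    rw [mem_eball_zero_iff]
    rw [Real.enorm_eq_ofReal_abs, ENNReal.ofReal_lt_one]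
    simpa [Real.norm_eq_abs] using hx
  have hfd := hball.fderiv
  have hsum := hfd.hasSum hmem
  rw [zero_add] at hsum
  have heval := hsum.mapL (ContinuousLinearMap.apply ℝ ℝ (1 : ℝ))
  simp only [ContinuousLinearMap.apply_apply] at heval
  have hterm : ∀ n : ℕ, (p.derivSeries n fun _ => x) 1 =
      (((n : ℝ) + 1) * c (n + 1)) * x ^ n := by
    intro n
    rcases eq_or_ne x 0 with h0 | h0
    · subst h0
      cases n with
      | zero =>
        have he : (fun _ : Fin 0 => (0 : ℝ)) = fun _ => (1 : ℝ) :=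
          funext fun i => i.elim0
        rw [he, p.derivSeries_apply_diag 0 1,
          show p 1 = FormalMultilinearSeries.ofScalars ℝ c 1 from rfl,
          FormalMultilinearSeries.ofScalars_apply_eq]
        norm_num
      | succ m =>
        have hz : p.derivSeries (m + 1) (fun _ : Fin (m + 1) => (0 : ℝ)) = 0 :=
          ContinuousMultilinearMap.map_coord_zero _ (0 : Fin (m + 1)) rfl
        rw [hz]
        simp
    · have hdiag := p.derivSeries_apply_diag n x
      have hlin : (p.derivSeries n fun _ => x) x =
          x * (p.derivSeries n fun _ => x) 1 := by
        conv_lhs => rw [show x = x • (1 : ℝ) by simp]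
        rw [ContinuousLinearMap.map_smul]
        simp [smul_eq_mul]
      rw [hlin] at hdiag
      apply mul_left_cancel₀ h0
      rw [hdiag, show p (n + 1) = FormalMultilinearSeries.ofScalars ℝ c (n + 1) from rfl,
        FormalMultilinearSeries.ofScalars_apply_eq]
      simp only [nsmul_eq_mul, smul_eq_mul]
      push_cast
      ring
  simp only [hterm] at heval
  have hdiff : DifferentiableAt ℝ (fun y : ℝ => ∑' n : ℕ, c n * y ^ n) x :=
    (hball.differentiableOn x hmem).differentiableAt (Metric.isOpen_eball.mem_nhds hmem)
  have hD : HasDerivAt (fun y : ℝ => ∑' n : ℕ, c n * y ^ n)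
      (fderiv ℝ (fun y : ℝ => ∑' n : ℕ, c n * y ^ n) x 1) x :=
    hdiff.hasFDerivAt.hasDerivAt
  convert hD using 1
  exact heval.tsum_eq

lemma summable_of_rec {d : ℕ → ℝ} {A B C D : ℝ} (hC : 0 < C) (hD : 0 < D)
    (hrec : ∀ n : ℕ, d (n + 1) * (((n : ℝ) + C) * ((n : ℝ) + D)) =
      d n * ((A + n) * (B + n))) {x : ℝ} (hx : |x| < 1) :
    Summable fun n => d n * x ^ n := by
  have habs := summable_abs_pow (abs_ratio_of_rec hC hD hrec)
    (tendsto_ratio A B C D hC hD) (abs_nonneg x) hx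
  apply Summable.of_abs
  simpa [abs_mul, abs_pow] using habs

lemma hasDerivAt_of_rec {d : ℕ → ℝ} {A B C D : ℝ} (hC : 0 < C) (hD : 0 < D)
    (hrec : ∀ n : ℕ, d (n + 1) * (((n : ℝ) + C) * ((n : ℝ) + D)) =
      d n * ((A + n) * (B + n))) {x : ℝ} (hx : |x| < 1) :
    HasDerivAt (fun y => ∑' n : ℕ, d n * y ^ n)
      (∑' n : ℕ, (((n : ℝ) + 1) * d (n + 1)) * x ^ n) x :=
  hasDerivAt_tsum_pow (abs_ratio_of_rec hC hD hrec) (tendsto_ratio A B C D hC hD) hx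

lemma hasDerivAt_Fg (a b : ℝ) {x : ℝ} (hx : |x| < 1) :
    HasDerivAt (Fg a b) (F1 a b x) x := by
  have h := hasDerivAt_of_rec (by norm_num) (by norm_num) (cg_rec a b) hx
  unfold Fg F1 c1
  exact h

lemma hasDerivAt_F1 (a b : ℝ) {x : ℝ} (hx : |x| < 1) :
    HasDerivAt (F1 a b) (F2 a b x) x := by
  have h := hasDerivAt_of_rec (by norm_num) (by norm_num) (c1_rec a b) hx
  unfold F1 F2 c2
  exact h

lemma ode (a b x : ℝ) (hx : |x| < 1) :
    x * (1 - x) * F2 a b x + (1 / 2 - (a + b + 1) * x) * F1 a b x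
      - a * b * Fg a b x = 0 := by
  have H0 : HasSum (fun n : ℕ => cg a b n * x ^ n) (Fg a b x) :=
    (summable_of_rec (by norm_num) (by norm_num) (cg_rec a b) hx).hasSum
  have H1 : HasSum (fun n : ℕ => c1 a b n * x ^ n) (F1 a b x) :=
    (summable_of_rec (by norm_num) (by norm_num) (c1_rec a b) hx).hasSum
  have H2 : HasSum (fun n : ℕ => c2 a b n * x ^ n) (F2 a b x) :=
    (summable_of_rec (by norm_num) (by norm_num) (c2_rec a b) hx).hasSum
  have hxF2 : HasSum (fun n : ℕ => (n : ℝ) * c1 a b n * x ^ n) (x * F2 a b x) := by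
    have h := H2.mul_left x
    have h' : HasSum (fun n : ℕ => ((n + 1 : ℕ) : ℝ) * c1 a b (n + 1) * x ^ (n + 1))
        (x * F2 a b x) := by
      have e : (fun n : ℕ => ((n + 1 : ℕ) : ℝ) * c1 a b (n + 1) * x ^ (n + 1)) =
          fun n : ℕ => x * (c2 a b n * x ^ n) := by
        funext n; simp only [c2]; push_cast; ring
      rw [e]; exact h
    have h5 := (hasSum_nat_add_iff
      (f := fun m : ℕ => (m : ℝ) * c1 a b m * x ^ m) 1).mp h'
    simpa using h5
  have hx2F2 : HasSum (fun n : ℕ => (n : ℝ) * ((n : ℝ) - 1) * cg a b n * x ^ n)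
      (x ^ 2 * F2 a b x) := by
    have h := H2.mul_left (x ^ 2)
    have h' : HasSum (fun n : ℕ =>
        ((n + 2 : ℕ) : ℝ) * (((n + 2 : ℕ) : ℝ) - 1) * cg a b (n + 2) * x ^ (n + 2))
        (x ^ 2 * F2 a b x) := by
      have e : (fun n : ℕ =>
          ((n + 2 : ℕ) : ℝ) * (((n + 2 : ℕ) : ℝ) - 1) * cg a b (n + 2) * x ^ (n + 2)) =
          fun n : ℕ => x ^ 2 * (c2 a b n * x ^ n) := by
        funext n
        simp only [c2, c1, show n + 1 + 1 = n + 2 from rfl]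
        push_cast
        ring
      rw [e]; exact h
    have h5 := (hasSum_nat_add_iff
      (f := fun m : ℕ => (m : ℝ) * ((m : ℝ) - 1) * cg a b m * x ^ m) 2).mp h'
    simpa [Finset.sum_range_succ] using h5
  have hxF1 : HasSum (fun n : ℕ => (n : ℝ) * cg a b n * x ^ n) (x * F1 a b x) := by
    have h := H1.mul_left x
    have h' : HasSum (fun n : ℕ => ((n + 1 : ℕ) : ℝ) * cg a b (n + 1) * x ^ (n + 1))
        (x * F1 a b x) := by
      have e : (fun n : ℕ => ((n + 1 : ℕ) : ℝ) * cg a b (n + 1) * x ^ (n + 1)) =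
          fun n : ℕ => x * (c1 a b n * x ^ n) := by
        funext n; simp only [c1]; push_cast; ring
      rw [e]; exact h
    have h5 := (hasSum_nat_add_iff
      (f := fun m : ℕ => (m : ℝ) * cg a b m * x ^ m) 1).mp h'
    simpa using h5
  have Hcomb := ((hxF2.sub hx2F2).add
    ((H1.mul_left (1 / 2)).sub (hxF1.mul_left (a + b + 1)))).sub (H0.mul_left (a * b))
  have hz : ∀ n : ℕ,
      ((n : ℝ) * c1 a b n * x ^ n - (n : ℝ) * ((n : ℝ) - 1) * cg a b n * x ^ n +
        (1 / 2 * (c1 a b n * x ^ n) - (a + b + 1) * ((n : ℝ) * cg a b n * x ^ n))) -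
        a * b * (cg a b n * x ^ n) = 0 := by
    intro n
    have h := cg_rec a b n
    simp only [c1]
    linear_combination x ^ n * h
  have h0 : x * F2 a b x - x ^ 2 * F2 a b x +
      (1 / 2 * F1 a b x - (a + b + 1) * (x * F1 a b x)) - a * b * Fg a b x = 0 :=
    (Hcomb.tsum_eq).symm.trans ((tsum_congr hz).trans tsum_zero)
  linear_combination h0

end PTaux

/-- With `a = (λ−k)/2`, `b = (λ+k)/2`, the even solution
`Υ_e(ζ) = (cosh ζ)^λ · ₂F₁(a, b; 1/2; −sinh²ζ)` satisfies, at every `ζ` with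
`|sinh ζ| < 1`, the Schrödinger equation with Pöschl–Teller potential
`Υ_e'' = (k² − λ(λ−1)/cosh²ζ) Υ_e`. -/
theorem poeschlTeller_even_solution (k lam : ℝ) :
    let a : ℝ := (lam - k) / 2
    let b : ℝ := (lam + k) / 2
    let Ue : ℝ → ℝ := fun ζ =>
      Real.cosh ζ ^ lam * gaussHypergeom a b (1 / 2) (-(Real.sinh ζ ^ 2))
    ∀ ζ : ℝ, |Real.sinh ζ| < 1 →
      DifferentiableAt ℝ Ue ζ ∧ DifferentiableAt ℝ (deriv Ue) ζ ∧
        deriv (deriv Ue) ζ =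
          (k ^ 2 - lam * (lam - 1) / Real.cosh ζ ^ 2) * Ue ζ := by
  intro a b Ue ζ hζ
  have hab : a + b = lam := by show (lam - k) / 2 + (lam + k) / 2 = lam; ring
  have hab4 : a * b = (lam ^ 2 - k ^ 2) / 4 := by
    show (lam - k) / 2 * ((lam + k) / 2) = _; ring
  have hUe : Ue = fun z => Real.cosh z ^ lam * PTaux.Fg a b (-(Real.sinh z ^ 2)) := by
    funext z
    show Real.cosh z ^ lam * gaussHypergeom a b (1 / 2) (-(Real.sinh z ^ 2)) = _
    rw [PTaux.gauss_eq]
  have hSin : ∀ z : ℝ, |Real.sinh z| < 1 → |(-(Real.sinh z ^ 2))| < 1 := by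
    intro z hz
    rw [abs_neg, abs_pow]
    calc |Real.sinh z| ^ 2 < 1 ^ 2 := by
          have h0 := abs_nonneg (Real.sinh z)
          nlinarith
      _ = 1 := one_pow 2
  have hS' : ∀ z : ℝ, HasDerivAt (fun w => -(Real.sinh w ^ 2))
      (-(2 * Real.sinh z * Real.cosh z)) z := by
    intro z
    have h := ((Real.hasDerivAt_sinh z).pow 2).neg
    refine h.congr_deriv ?_
    push_cast
    ring
  have hch : ∀ z : ℝ, HasDerivAt (fun w => Real.cosh w ^ lam)
      (Real.sinh z * lam * Real.cosh z ^ (lam - 1)) z := fun z =>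
    (Real.hasDerivAt_cosh z).rpow_const (Or.inl (Real.cosh_pos z).ne')
  set U1 : ℝ → ℝ := fun z =>
    Real.sinh z * lam * Real.cosh z ^ (lam - 1) * PTaux.Fg a b (-(Real.sinh z ^ 2)) +
      Real.cosh z ^ lam * (PTaux.F1 a b (-(Real.sinh z ^ 2)) *
        -(2 * Real.sinh z * Real.cosh z)) with hU1def
  have hUe' : ∀ z : ℝ, |Real.sinh z| < 1 → HasDerivAt Ue (U1 z) z := by
    intro z hz
    have hF : HasDerivAt (PTaux.Fg a b) (PTaux.F1 a b (-(Real.sinh z ^ 2)))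
        (-(Real.sinh z ^ 2)) := PTaux.hasDerivAt_Fg a b (hSin z hz)
    have hFS : HasDerivAt (fun w => PTaux.Fg a b (-(Real.sinh w ^ 2)))
        (PTaux.F1 a b (-(Real.sinh z ^ 2)) * -(2 * Real.sinh z * Real.cosh z)) z := by
      have h := hF.comp z (hS' z)
      simpa [Function.comp_def] using h
    have h := (hch z).mul hFS
    rw [hUe]
    exact h
  refine ⟨(hUe' ζ hζ).differentiableAt, ?_, ?_⟩
  all_goals {
    have hmem : {z : ℝ | |Real.sinh z| < 1} ∈ 𝓝 ζ := by
      have hopen : IsOpen {z : ℝ | |Real.sinh z| < 1} :=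
        isOpen_lt Real.continuous_sinh.abs continuous_const
      exact hopen.mem_nhds hζ
    have hevd : deriv Ue =ᶠ[𝓝 ζ] U1 := by
      filter_upwards [hmem] with z hz
      exact (hUe' z hz).deriv
    have hxS : |(-(Real.sinh ζ ^ 2))| < 1 := hSin ζ hζ
    have hF : HasDerivAt (PTaux.Fg a b) (PTaux.F1 a b (-(Real.sinh ζ ^ 2)))
        (-(Real.sinh ζ ^ 2)) := PTaux.hasDerivAt_Fg a b hxS
    have hF1 : HasDerivAt (PTaux.F1 a b) (PTaux.F2 a b (-(Real.sinh ζ ^ 2)))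
        (-(Real.sinh ζ ^ 2)) := PTaux.hasDerivAt_F1 a b hxS
    have hFS : HasDerivAt (fun w => PTaux.Fg a b (-(Real.sinh w ^ 2)))
        (PTaux.F1 a b (-(Real.sinh ζ ^ 2)) * -(2 * Real.sinh ζ * Real.cosh ζ)) ζ := by
      have h := hF.comp ζ (hS' ζ)
      simpa [Function.comp_def] using h
    have hF1S : HasDerivAt (fun w => PTaux.F1 a b (-(Real.sinh w ^ 2)))
        (PTaux.F2 a b (-(Real.sinh ζ ^ 2)) * -(2 * Real.sinh ζ * Real.cosh ζ)) ζ := by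
      have h := hF1.comp ζ (hS' ζ)
      simpa [Function.comp_def] using h
    have hA : HasDerivAt (fun z => Real.sinh z * lam) (Real.cosh ζ * lam) ζ :=
      (Real.hasDerivAt_sinh ζ).mul_const lam
    have hB : HasDerivAt (fun z => Real.cosh z ^ (lam - 1))
        (Real.sinh ζ * (lam - 1) * Real.cosh ζ ^ (lam - 1 - 1)) ζ :=
      (Real.hasDerivAt_cosh ζ).rpow_const (Or.inl (Real.cosh_pos ζ).ne')
    have h1 := hA.mul hB
    have hterm1 := h1.mul hFS
    have hneg : HasDerivAt (fun z => -(2 * Real.sinh z * Real.cosh z))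
        (-(2 * Real.cosh ζ * Real.cosh ζ + 2 * Real.sinh ζ * Real.sinh ζ)) ζ := by
      have h := (((Real.hasDerivAt_sinh ζ).const_mul 2).mul (Real.hasDerivAt_cosh ζ)).neg
      exact h
    have hinner := hF1S.mul hneg
    have hterm2 := (hch ζ).mul hinner
    have htotal : HasDerivAt U1
        ((Real.cosh ζ * lam * Real.cosh ζ ^ (lam - 1) +
          Real.sinh ζ * lam * (Real.sinh ζ * (lam - 1) * Real.cosh ζ ^ (lam - 1 - 1))) *
            PTaux.Fg a b (-(Real.sinh ζ ^ 2)) +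
          Real.sinh ζ * lam * Real.cosh ζ ^ (lam - 1) *
            (PTaux.F1 a b (-(Real.sinh ζ ^ 2)) * -(2 * Real.sinh ζ * Real.cosh ζ)) +
          (Real.sinh ζ * lam * Real.cosh ζ ^ (lam - 1) *
            (PTaux.F1 a b (-(Real.sinh ζ ^ 2)) * -(2 * Real.sinh ζ * Real.cosh ζ)) +
            Real.cosh ζ ^ lam *
              (PTaux.F2 a b (-(Real.sinh ζ ^ 2)) * -(2 * Real.sinh ζ * Real.cosh ζ) *
                -(2 * Real.sinh ζ * Real.cosh ζ) +
              PTaux.F1 a b (-(Real.sinh ζ ^ 2)) *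
                -(2 * Real.cosh ζ * Real.cosh ζ + 2 * Real.sinh ζ * Real.sinh ζ)))) ζ := by
      rw [hU1def]
      exact hterm1.add hterm2
    first
    | exact (hevd.differentiableAt_iff).mpr htotal.differentiableAt
    | {
      rw [hevd.deriv_eq, htotal.deriv, hUe]
      have hcne : Real.cosh ζ ≠ 0 := (Real.cosh_pos ζ).ne'
      have hQ : Real.cosh ζ ^ (lam - 1) = Real.cosh ζ ^ lam / Real.cosh ζ := by
        rw [Real.rpow_sub (Real.cosh_pos ζ), Real.rpow_one]
      have hR : Real.cosh ζ ^ (lam - 1 - 1) =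
          Real.cosh ζ ^ lam / (Real.cosh ζ * Real.cosh ζ) := by
        rw [Real.rpow_sub (Real.cosh_pos ζ), Real.rpow_sub (Real.cosh_pos ζ),
          Real.rpow_one, div_div]
      have hpy : Real.cosh ζ ^ (2 : ℕ) = Real.sinh ζ ^ 2 + 1 := Real.cosh_sq ζ
      have hode := PTaux.ode a b (-(Real.sinh ζ ^ 2)) hxS
      rw [hQ, hR]
      show _ = (k ^ 2 - lam * (lam - 1) / Real.cosh ζ ^ 2) *
        (Real.cosh ζ ^ lam * PTaux.Fg a b (-(Real.sinh ζ ^ 2)))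
      set s := Real.sinh ζ with hsdef
      set ch := Real.cosh ζ with hchdef
      set P := ch ^ lam with hPdef
      set F := PTaux.Fg a b (-(s ^ 2)) with hFdef
      set G := PTaux.F1 a b (-(s ^ 2)) with hGdef
      set H := PTaux.F2 a b (-(s ^ 2)) with hHdef
      have hu : ch * ch⁻¹ = 1 := mul_inv_cancel₀ hcne
      linear_combination (-4 * P) * hode +
        (4 * s ^ 2 * P * H - 2 * P * G - lam * (lam - 1) * P * F / ch ^ 2) * hpy +
        (4 * s ^ 2 * P * G) * hab + (-4 * P * F) * hab4 +
        ((lam ^ 2 - lam) * P * F * (ch * ch⁻¹ + 1) + lam * P * F -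
          4 * lam * P * G * s ^ 2) * hu
    }
  }
end

section
/- Let k, λ ∈ ℝ and set a = (λ−k)/2, b = (λ+k)/2. Define Υ_o(ζ) = (cosh ζ)^λ · sinh(ζ) · ₂F₁(a + 1/2, b + 1/2; 3/2; −sinh²(ζ)). Then for every ζ ∈ ℝ with |sinh ζ| < 1 (so that the hypergeometric series converges at the argument −sinh²ζ), Υ_o is twice differentiable at ζ and satisfies Υ_o''(ζ) = (k² − λ(λ−1)/cosh²(ζ)) · Υ_o(ζ). -/
set_option maxHeartbeats 1000000

open Real

namespace PTaux

noncomputable def dd (A B : ℝ) (n : ℕ) : ℝ :=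
  (ascPochhammer ℝ n).eval A * (ascPochhammer ℝ n).eval B /
    ((ascPochhammer ℝ n).eval (3/2 : ℝ) * n.factorial)

noncomputable def cc (A B : ℝ) (n : ℕ) : ℝ := (-1)^n * dd A B n

lemma poch32_pos (n : ℕ) : 0 < (ascPochhammer ℝ n).eval (3/2 : ℝ) :=
  ascPochhammer_pos n _ (by norm_num)

lemma poch32_ge (n : ℕ) : (n.factorial : ℝ) ≤ (ascPochhammer ℝ n).eval (3/2 : ℝ) := by
  induction n with
  | zero => simp
  | succ m ih =>
    rw [ascPochhammer_succ_eval, Nat.factorial_succ]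
    push_cast
    have := Nat.one_le_iff_ne_zero.2 m.factorial_ne_zero
    have hf : (1:ℝ) ≤ m.factorial := by exact_mod_cast this
    nlinarith [poch32_pos m]

lemma cc_rec (A B : ℝ) (n : ℕ) :
    cc A B (n+1) * (((n:ℝ) + 3/2) * ((n:ℝ)+1)) = -(cc A B n) * ((A + n) * (B + n)) := by
  unfold cc dd
  rw [ascPochhammer_succ_eval, ascPochhammer_succ_eval, ascPochhammer_succ_eval,
    Nat.factorial_succ, pow_succ]
  have h1 : ((ascPochhammer ℝ n).eval (3/2 : ℝ)) ≠ 0 := (poch32_pos n).ne'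
  have h2 : ((n.factorial : ℝ)) ≠ 0 := by exact_mod_cast n.factorial_ne_zero
  push_cast
  field_simp
  ring

lemma poch_eval_one (n : ℕ) : (ascPochhammer ℝ n).eval 1 = n.factorial := by
  induction n with
  | zero => simp
  | succ m ih => rw [ascPochhammer_succ_eval, ih, Nat.factorial_succ]; push_cast; ring

lemma poch_shift (x : ℝ) (n : ℕ) :
    x * (ascPochhammer ℝ n).eval (x+1) = (ascPochhammer ℝ n).eval x * (x + n) := by
  have h1 : (ascPochhammer ℝ (n+1)).eval x = x * (ascPochhammer ℝ n).eval (x+1) := by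
    rw [ascPochhammer_succ_left]
    simp [Polynomial.eval_comp]
  rw [← h1, ascPochhammer_succ_eval]

lemma poch_nat_le (n M : ℕ) :
    (ascPochhammer ℝ n).eval ((M:ℝ)+1) ≤ (n.factorial : ℝ) * ((n:ℝ)+1)^M := by
  induction M with
  | zero => simp [poch_eval_one]
  | succ M ih =>
    have hx : (0:ℝ) < (M:ℝ)+1 := by positivity
    have hshift := poch_shift ((M:ℝ)+1) n
    have hpos : 0 < (ascPochhammer ℝ n).eval ((M:ℝ)+1) := ascPochhammer_pos n _ hx
    have hfac : (0:ℝ) < n.factorial := by exact_mod_cast n.factorial_pos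
    have hp : (0:ℝ) < ((n:ℝ)+1)^M := by positivity
    have key : ((M:ℝ)+1) * (ascPochhammer ℝ n).eval ((M:ℝ)+1+1)
        ≤ ((M:ℝ)+1) * ((n.factorial : ℝ) * ((n:ℝ)+1)^(M+1)) := by
      rw [hshift]
      calc (ascPochhammer ℝ n).eval ((M:ℝ)+1) * ((M:ℝ)+1+n)
          ≤ ((n.factorial : ℝ) * ((n:ℝ)+1)^M) * ((M:ℝ)+1+n) :=
            mul_le_mul_of_nonneg_right ih (by positivity)
        _ ≤ ((n.factorial : ℝ) * ((n:ℝ)+1)^M) * (((n:ℝ)+1)*((M:ℝ)+1)) := by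
            apply mul_le_mul_of_nonneg_left (by nlinarith) (by positivity)
        _ = ((M:ℝ)+1) * ((n.factorial : ℝ) * ((n:ℝ)+1)^(M+1)) := by rw [pow_succ]; ring
    have := (mul_le_mul_iff_right₀ hx).1 key
    push_cast
    convert this using 2 <;> push_cast <;> ring

lemma poch_abs_le (x : ℝ) (M : ℕ) (hx : |x| ≤ (M:ℝ)+1) (n : ℕ) :
    |(ascPochhammer ℝ n).eval x| ≤ (ascPochhammer ℝ n).eval ((M:ℝ)+1) := by
  induction n with
  | zero => simp
  | succ m ih =>
    rw [ascPochhammer_succ_eval, ascPochhammer_succ_eval, abs_mul]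
    have h1 : |x + m| ≤ ((M:ℝ)+1) + m := by
      calc |x + m| ≤ |x| + m := by simpa using abs_add_le x (m:ℝ)
      _ ≤ ((M:ℝ)+1) + m := by linarith
    exact mul_le_mul ih h1 (abs_nonneg _) (ascPochhammer_pos m _ (by positivity)).le

lemma dd_abs_le (A B : ℝ) (M : ℕ) (hA : |A| ≤ (M:ℝ)+1) (hB : |B| ≤ (M:ℝ)+1) (n : ℕ) :
    |dd A B n| ≤ ((n:ℝ)+1)^(2*M) := by
  have hfac : (0:ℝ) < n.factorial := by exact_mod_cast n.factorial_pos
  have hpc := poch32_pos n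
  have hge := poch32_ge n
  have hnum : |(ascPochhammer ℝ n).eval A * (ascPochhammer ℝ n).eval B|
      ≤ ((n.factorial : ℝ) * ((n:ℝ)+1)^M)^2 := by
    rw [abs_mul, sq]
    exact mul_le_mul ((poch_abs_le A M hA n).trans (poch_nat_le n M))
      ((poch_abs_le B M hB n).trans (poch_nat_le n M)) (abs_nonneg _) (by positivity)
  have hden : (0:ℝ) < (ascPochhammer ℝ n).eval (3/2:ℝ) * n.factorial := by positivity
  unfold dd
  rw [abs_div, abs_of_pos hden]
  have h2 : (n.factorial : ℝ) * n.factorial ≤ (ascPochhammer ℝ n).eval (3/2:ℝ) * n.factorial :=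
    mul_le_mul_of_nonneg_right hge hfac.le
  calc |(ascPochhammer ℝ n).eval A * (ascPochhammer ℝ n).eval B| /
        ((ascPochhammer ℝ n).eval (3/2:ℝ) * n.factorial)
      ≤ ((n.factorial : ℝ) * ((n:ℝ)+1)^M)^2 / ((n.factorial : ℝ) * n.factorial) :=
        div_le_div₀ (by positivity) hnum (by positivity) h2
    _ = ((n.factorial:ℝ)^2 * (((n:ℝ)+1)^M)^2) / ((n.factorial:ℝ)^2) := by
        rw [mul_pow, pow_two]
    _ = (((n:ℝ)+1)^M)^2 := by
        field_simp
    _ = ((n:ℝ)+1)^(2*M) := by rw [← pow_mul, mul_comm]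

lemma cc_abs (A B : ℝ) (n : ℕ) : |cc A B n| = |dd A B n| := by
  unfold cc; rw [abs_mul, abs_pow, abs_neg, abs_one, one_pow, one_mul]

lemma summable_aux (J : ℕ) (r : ℝ) (h0 : 0 ≤ r) (h1 : r < 1) :
    Summable (fun n : ℕ => ((n:ℝ)+1)^J * r^n) := by
  rcases eq_or_lt_of_le h0 with h | h
  · apply summable_of_ne_finset_zero (s := {0})
    intro n hn
    simp only [Finset.mem_singleton] at hn
    rw [← h, zero_pow hn, mul_zero]
  · have hs : Summable (fun n : ℕ => (n:ℝ)^J * r^n) :=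
      summable_pow_mul_geometric_of_norm_lt_one J (by rwa [Real.norm_eq_abs, abs_of_pos h])
    have hs2 : Summable (fun n : ℕ => ((n+1:ℕ):ℝ)^J * r^(n+1)) := (summable_nat_add_iff 1).2 hs
    have hs3 := hs2.mul_left r⁻¹
    apply hs3.congr
    intro n
    push_cast
    field_simp
    ring

end PTaux

namespace PTaux2

lemma hasDerivAt_gg (p : ℝ) (q : ℕ) (y : ℝ) :
    HasDerivAt (fun z => Real.cosh z ^ p * Real.sinh z ^ q)
      (p * Real.cosh y ^ (p-1) * Real.sinh y ^ (q+1)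
        + (q:ℝ) * Real.cosh y ^ (p+1) * Real.sinh y ^ (q-1)) y := by
  have h1 : HasDerivAt (fun z => Real.cosh z ^ p)
      (Real.sinh y * p * Real.cosh y ^ (p-1)) y :=
    (Real.hasDerivAt_cosh y).rpow_const (Or.inl (Real.cosh_pos y).ne')
  have h2 : HasDerivAt (fun z => Real.sinh z ^ q)
      ((q:ℝ) * Real.sinh y ^ (q-1) * Real.cosh y) y :=
    (Real.hasDerivAt_sinh y).pow q
  have h := h1.mul h2
  refine h.congr_deriv ?_
  rw [Real.rpow_add_one (Real.cosh_pos y).ne' p, pow_succ]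
  ring

noncomputable def FF (c : ℕ → ℝ) (lam : ℝ) (n : ℕ) (y : ℝ) : ℝ :=
  c n * (Real.cosh y ^ lam * Real.sinh y ^ (2*n+1))

noncomputable def F1 (c : ℕ → ℝ) (lam : ℝ) (n : ℕ) (y : ℝ) : ℝ :=
  c n * (lam * (Real.cosh y ^ (lam-1) * Real.sinh y ^ (2*n+2))
    + (2*(n:ℝ)+1) * (Real.cosh y ^ (lam+1) * Real.sinh y ^ (2*n)))

noncomputable def F2 (c : ℕ → ℝ) (lam : ℝ) (n : ℕ) (y : ℝ) : ℝ :=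
  c n * (lam * ((lam-1) * Real.cosh y ^ (lam-2) * Real.sinh y ^ (2*n+3)
      + (2*(n:ℝ)+2) * Real.cosh y ^ lam * Real.sinh y ^ (2*n+1))
    + (2*(n:ℝ)+1) * ((lam+1) * Real.cosh y ^ lam * Real.sinh y ^ (2*n+1)
      + (2*(n:ℝ)) * Real.cosh y ^ (lam+2) * Real.sinh y ^ (2*n-1)))

noncomputable def EE (c : ℕ → ℝ) (lam : ℝ) (n : ℕ) (y : ℝ) : ℝ :=
  c n * (2*(n:ℝ) * (2*(n:ℝ)+1)) * (Real.cosh y ^ lam * Real.sinh y ^ (2*n-1))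

noncomputable def uu (lam : ℝ) (M : ℕ) (r K : ℝ) (n : ℕ) : ℝ :=
  (K*(|lam|+5)^2) * (((n:ℝ)+1)^(2*M+2) * (r^2)^n)

lemma hasDerivAt_FF (c : ℕ → ℝ) (lam : ℝ) (n : ℕ) (y : ℝ) :
    HasDerivAt (fun z => FF c lam n z) (F1 c lam n y) y := by
  have h := (hasDerivAt_gg lam (2*n+1) y).const_mul (c n)
  refine h.congr_deriv ?_
  unfold F1
  have e1 : 2*n+1+1 = 2*n+2 := rfl
  have e2 : 2*n+1-1 = 2*n := rfl
  rw [e1, e2]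
  push_cast
  ring

lemma hasDerivAt_F1 (c : ℕ → ℝ) (lam : ℝ) (n : ℕ) (y : ℝ) :
    HasDerivAt (fun z => F1 c lam n z) (F2 c lam n y) y := by
  have h := (((hasDerivAt_gg (lam-1) (2*n+2) y).const_mul lam).add
    ((hasDerivAt_gg (lam+1) (2*n) y).const_mul (2*(n:ℝ)+1))).const_mul (c n)
  refine h.congr_deriv ?_
  unfold F2
  have e1 : lam - 1 - 1 = lam - 2 := by ring
  have e2 : lam - 1 + 1 = lam := by ring
  have e3 : lam + 1 - 1 = lam := by ring
  have e4 : lam + 1 + 1 = lam + 2 := by ring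
  have e5 : 2*n+2+1 = 2*n+3 := rfl
  have e6 : 2*n+2-1 = 2*n+1 := rfl
  rw [e1, e2, e3, e4, e5, e6]
  push_cast
  ring


lemma bound_all (c : ℕ → ℝ) (lam : ℝ) (M : ℕ) (hc : ∀ n, |c n| ≤ ((n:ℝ)+1)^(2*M))
    (r K : ℝ) (hr : 1/2 ≤ r) (hr1 : r ≤ 1) (hK1 : 1 ≤ K)
    (y : ℝ) (hs : |Real.sinh y| ≤ r)
    (hcosh : ∀ p : ℝ, |p| ≤ |lam| + 2 → Real.cosh y ^ p ≤ K) (n : ℕ) :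
    |FF c lam n y| ≤ uu lam M r K n ∧ |F1 c lam n y| ≤ uu lam M r K n ∧
      |F2 c lam n y| ≤ uu lam M r K n ∧ |EE c lam n y| ≤ uu lam M r K n := by
  have hr0 : (0:ℝ) ≤ r := by linarith
  have hK0 : (0:ℝ) ≤ K := by linarith
  have hterm : ∀ (p:ℝ) (q:ℕ), |p| ≤ |lam|+2 →
      |Real.cosh y ^ p * Real.sinh y ^ q| ≤ K * r ^ q := by
    intro p q hp
    rw [abs_mul, abs_pow, abs_of_pos (Real.rpow_pos_of_pos (Real.cosh_pos y) p)]
    exact mul_le_mul (hcosh p hp) (pow_le_pow_left₀ (abs_nonneg _) hs q) (by positivity) hK0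
  have habs3 : ∀ (co : ℝ) (p : ℝ) (q : ℕ), |p| ≤ |lam|+2 →
      |co * Real.cosh y ^ p * Real.sinh y ^ q| ≤ |co| * (K * r ^ q) := by
    intro co p q hp
    rw [mul_assoc, abs_mul]
    exact mul_le_mul_of_nonneg_left (hterm p q hp) (abs_nonneg _)
  -- exponent bounds
  have hq1 : ∀ j : ℕ, r ^ (2*n+j) ≤ r ^ (2*n) := fun j =>
    pow_le_pow_of_le_one hr0 hr1 (by omega)
  have hqm : r ^ (2*n-1) ≤ 2 * r ^ (2*n) := by
    cases n with
    | zero => norm_num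
    | succ m =>
      have e2 : 2*(m+1) - 1 = 2*m+1 := by omega
      have e3 : r^(2*(m+1)) = r^(2*m+1) * r := by
        rw [show 2*(m+1) = (2*m+1)+1 by omega, pow_succ]
      rw [e2, e3]
      nlinarith [pow_nonneg hr0 (2*m+1)]
  have hpl : ∀ j : ℝ, |j| ≤ 2 → |lam + j| ≤ |lam| + 2 := by
    intro j hj
    calc |lam + j| ≤ |lam| + |j| := abs_add_le lam j
      _ ≤ |lam| + 2 := by linarith
  have hl0 : |lam - 1| ≤ |lam| + 1 := by
    calc |lam - 1| ≤ |lam| + |(1:ℝ)| := abs_sub lam 1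
      _ = |lam| + 1 := by norm_num
  have hP0 : (0:ℝ) ≤ r ^ (2*n) := by positivity
  have hN0 : (0:ℝ) ≤ (n:ℝ) := n.cast_nonneg
  have hL0 : (0:ℝ) ≤ |lam| := abs_nonneg lam
  have hu : uu lam M r K n
      = (((n:ℝ)+1)^(2*M)) * ((K*(|lam|+5)^2) * (((n:ℝ)+1)^2 * r^(2*n))) := by
    unfold uu
    rw [pow_add, ← pow_mul]
    ring
  have hcn := hc n
  have hcn0 := abs_nonneg (c n)
  have hpow0 : (0:ℝ) ≤ ((n:ℝ)+1)^(2*M) := by positivity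
  refine ⟨?_, ?_, ?_, ?_⟩
  · -- FF
    unfold FF
    rw [abs_mul, hu]
    apply mul_le_mul hcn ((hterm lam (2*n+1) (by simpa using hpl 0 (by norm_num))).trans ?_)
      (abs_nonneg _) hpow0
    have h1 : K * r ^ (2*n+1) ≤ K * r ^ (2*n) := mul_le_mul_of_nonneg_left (hq1 1) hK0
    have inner : (0:ℝ) ≤ ((n:ℝ)+1)^2*(|lam|+5)^2 - 1 := by nlinarith [mul_nonneg hN0 hL0]
    nlinarith [mul_nonneg (mul_nonneg hK0 hP0) inner]
  · -- F1
    unfold F1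
    rw [abs_mul, hu]
    apply mul_le_mul hcn ?_ (abs_nonneg _) hpow0
    calc |lam * (Real.cosh y ^ (lam-1) * Real.sinh y ^ (2*n+2))
          + (2*(n:ℝ)+1) * (Real.cosh y ^ (lam+1) * Real.sinh y ^ (2*n))|
        ≤ |lam| * |Real.cosh y ^ (lam-1) * Real.sinh y ^ (2*n+2)|
          + |2*(n:ℝ)+1| * |Real.cosh y ^ (lam+1) * Real.sinh y ^ (2*n)| := by
          exact (abs_add_le _ _).trans (add_le_add (le_of_eq (abs_mul _ _)) (le_of_eq (abs_mul _ _)))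
      _ ≤ |lam| * (K * r^(2*n+2)) + (2*(n:ℝ)+1) * (K * r^(2*n)) := by
          rw [abs_of_nonneg (by linarith : (0:ℝ) ≤ 2*(n:ℝ)+1)]
          exact add_le_add
            (mul_le_mul_of_nonneg_left (hterm _ _ (by have := hpl (-1) (by norm_num); rwa [← sub_eq_add_neg] at this)) hL0)
            (mul_le_mul_of_nonneg_left (hterm _ _ (hpl 1 (by norm_num))) (by linarith))
      _ ≤ |lam| * (K * r^(2*n)) + (2*(n:ℝ)+1) * (K * r^(2*n)) := by
          exact add_le_add
            (mul_le_mul_of_nonneg_left (mul_le_mul_of_nonneg_left (hq1 2) hK0) hL0) le_rfl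
      _ ≤ (K*(|lam|+5)^2) * (((n:ℝ)+1)^2 * r^(2*n)) := by
          have inner : (0:ℝ) ≤ ((n:ℝ)+1)^2*(|lam|+5)^2 - (|lam| + (2*(n:ℝ)+1)) := by
            nlinarith [mul_nonneg hN0 hL0]
          nlinarith [mul_nonneg (mul_nonneg hK0 hP0) inner]
  · -- F2
    unfold F2
    rw [abs_mul, hu]
    apply mul_le_mul hcn ?_ (abs_nonneg _) hpow0
    have hT1 := habs3 (lam-1) (lam-2) (2*n+3) (by have := hpl (-2) (by norm_num); rwa [← sub_eq_add_neg] at this)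
    have hT2 := habs3 (2*(n:ℝ)+2) lam (2*n+1) (by simpa using hpl 0 (by norm_num))
    have hT3 := habs3 (lam+1) lam (2*n+1) (by simpa using hpl 0 (by norm_num))
    have hT4 := habs3 (2*(n:ℝ)) (lam+2) (2*n-1) (hpl 2 (by norm_num))
    calc |lam * ((lam-1) * Real.cosh y ^ (lam-2) * Real.sinh y ^ (2*n+3)
          + (2*(n:ℝ)+2) * Real.cosh y ^ lam * Real.sinh y ^ (2*n+1))
        + (2*(n:ℝ)+1) * ((lam+1) * Real.cosh y ^ lam * Real.sinh y ^ (2*n+1)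
          + (2*(n:ℝ)) * Real.cosh y ^ (lam+2) * Real.sinh y ^ (2*n-1))|
        ≤ |lam| * (|(lam-1) * Real.cosh y ^ (lam-2) * Real.sinh y ^ (2*n+3)|
            + |(2*(n:ℝ)+2) * Real.cosh y ^ lam * Real.sinh y ^ (2*n+1)|)
          + |2*(n:ℝ)+1| * (|(lam+1) * Real.cosh y ^ lam * Real.sinh y ^ (2*n+1)|
            + |(2*(n:ℝ)) * Real.cosh y ^ (lam+2) * Real.sinh y ^ (2*n-1)|) := by
          refine (abs_add_le _ _).trans (add_le_add ((abs_mul _ _).le.trans ?_) ((abs_mul _ _).le.trans ?_))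
          · exact mul_le_mul_of_nonneg_left (abs_add_le _ _) (abs_nonneg _)
          · exact mul_le_mul_of_nonneg_left (abs_add_le _ _) (abs_nonneg _)
      _ ≤ |lam| * ((|lam|+1) * (K * r^(2*n+3)) + (2*(n:ℝ)+2) * (K * r^(2*n+1)))
          + (2*(n:ℝ)+1) * ((|lam|+1) * (K * r^(2*n+1)) + (2*(n:ℝ)) * (K * r^(2*n-1))) := by
          rw [abs_of_nonneg (by linarith : (0:ℝ) ≤ 2*(n:ℝ)+1)]
          have X1 := hT1.trans (mul_le_mul_of_nonneg_right hl0 (by positivity))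
          have X2 := hT2.trans (le_of_eq (by
            rw [abs_of_nonneg (by linarith : (0:ℝ) ≤ 2*(n:ℝ)+2)]))
          have hl1 : |lam + 1| ≤ |lam| + 1 := (abs_add_le lam 1).trans (by norm_num)
          have X3 := hT3.trans (mul_le_mul_of_nonneg_right hl1 (by positivity))
          have X4 := hT4.trans (le_of_eq (by
            rw [abs_of_nonneg (by linarith : (0:ℝ) ≤ 2*(n:ℝ))]))
          exact add_le_add (mul_le_mul_of_nonneg_left (add_le_add X1 X2) hL0)
            (mul_le_mul_of_nonneg_left (add_le_add X3 X4) (by linarith))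
      _ ≤ |lam| * ((|lam|+1) * (K * r^(2*n)) + (2*(n:ℝ)+2) * (K * r^(2*n)))
          + (2*(n:ℝ)+1) * ((|lam|+1) * (K * r^(2*n)) + (2*(n:ℝ)) * (K * (2*r^(2*n)))) := by
          exact add_le_add
            (mul_le_mul_of_nonneg_left (add_le_add
              (mul_le_mul_of_nonneg_left (mul_le_mul_of_nonneg_left (hq1 3) hK0) (by positivity))
              (mul_le_mul_of_nonneg_left (mul_le_mul_of_nonneg_left (hq1 1) hK0) (by linarith))) hL0)
            (mul_le_mul_of_nonneg_left (add_le_add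
              (mul_le_mul_of_nonneg_left (mul_le_mul_of_nonneg_left (hq1 1) hK0) (by positivity))
              (mul_le_mul_of_nonneg_left (mul_le_mul_of_nonneg_left hqm hK0) (by positivity))) (by linarith))
      _ ≤ (K*(|lam|+5)^2) * (((n:ℝ)+1)^2 * r^(2*n)) := by
          have inner : (0:ℝ) ≤ ((n:ℝ)+1)^2*(|lam|+5)^2
              - (|lam| * ((|lam|+1) + (2*(n:ℝ)+2)) + (2*(n:ℝ)+1)*((|lam|+1) + 4*(n:ℝ))) := by
            nlinarith [mul_nonneg hN0 hL0, mul_nonneg (mul_nonneg hN0 hN0) hL0,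
              mul_nonneg (mul_nonneg hL0 hL0) hN0]
          nlinarith [mul_nonneg (mul_nonneg hK0 hP0) inner]
  · -- EE
    unfold EE
    rw [abs_mul, abs_mul, hu, mul_assoc]
    refine mul_le_mul hcn ?_ (by positivity) hpow0
    have h4 := hterm lam (2*n-1) (by simpa using hpl 0 (by norm_num))
    rw [abs_of_nonneg (by positivity : (0:ℝ) ≤ 2*(n:ℝ) * (2*(n:ℝ)+1))]
    calc (2*(n:ℝ) * (2*(n:ℝ)+1)) * |Real.cosh y ^ lam * Real.sinh y ^ (2*n-1)|
        ≤ (2*(n:ℝ) * (2*(n:ℝ)+1)) * (K * r^(2*n-1)) :=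
          mul_le_mul_of_nonneg_left h4 (by positivity)
      _ ≤ (2*(n:ℝ) * (2*(n:ℝ)+1)) * (K * (2*r^(2*n))) :=
          mul_le_mul_of_nonneg_left (mul_le_mul_of_nonneg_left hqm hK0) (by positivity)
      _ ≤ (K*(|lam|+5)^2) * (((n:ℝ)+1)^2 * r^(2*n)) := by
          have inner : (0:ℝ) ≤ ((n:ℝ)+1)^2*(|lam|+5)^2 - (2*(n:ℝ)*(2*(n:ℝ)+1)*2) := by
            nlinarith [mul_nonneg hN0 hL0, mul_nonneg (mul_nonneg hN0 hN0) hL0]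
          nlinarith [mul_nonneg (mul_nonneg hK0 hP0) inner]


lemma key_pointwise (cfun : ℕ → ℝ) (k lam A B : ℝ)
    (hA : A = (lam - k)/2 + 1/2) (hB : B = (lam + k)/2 + 1/2)
    (hrec : ∀ n : ℕ, cfun (n+1) * (((n:ℝ) + 3/2) * ((n:ℝ)+1)) = -(cfun n) * ((A + n) * (B + n)))
    (n : ℕ) (y : ℝ) :
    F2 cfun lam n y - (k^2 - lam*(lam-1)/Real.cosh y^2) * FF cfun lam n y
      = EE cfun lam n y - EE cfun lam (n+1) y := by
  have hcp := Real.cosh_pos y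
  have hc0 : Real.cosh y ≠ 0 := hcp.ne'
  have hc2 : Real.cosh y ^ 2 = 1 + Real.sinh y ^ 2 := Real.cosh_sq' y
  have hds : (1:ℝ) + Real.sinh y ^ 2 ≠ 0 := by positivity
  have hm2 : Real.cosh y ^ (lam-2) * Real.cosh y ^ 2 = Real.cosh y ^ lam := by
    rw [← Real.rpow_natCast (Real.cosh y) 2, ← Real.rpow_add hcp]; norm_num
  have hp2 : Real.cosh y ^ (lam+2) = Real.cosh y ^ lam * Real.cosh y ^ 2 := by
    rw [← Real.rpow_natCast (Real.cosh y) 2, ← Real.rpow_add hcp]; norm_num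
  have hXm : Real.cosh y ^ (lam-2) = Real.cosh y ^ lam / (1 + Real.sinh y ^ 2) := by
    rw [eq_div_iff hds, ← hc2]; exact hm2
  have hE : ∀ m : ℕ, cfun (m+1) * ((2*(m:ℝ)+2)*(2*(m:ℝ)+3))
      = -(cfun m) * ((lam+2*(m:ℝ)+1)^2 - k^2) := by
    intro m
    have h := hrec m
    rw [hA, hB] at h
    linear_combination 4 * h
  cases n with
  | zero =>
    have h0 := hE 0
    norm_num at h0
    unfold FF F2 EE
    norm_num
    rw [hXm, hc2]
    field_simp
    linear_combination (Real.sinh y * (1 + Real.sinh y ^ 2)) * h0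
  | succ m =>
    have h1 := hE (m+1)
    unfold FF F2 EE
    push_cast
    have e1 : 2*(m+1)+3 = (2*m+1)+4 := by omega
    have e2 : 2*(m+1)+1 = (2*m+1)+2 := by omega
    have e3 : 2*(m+1)-1 = 2*m+1 := by omega
    have e4 : 2*(m+1+1)-1 = (2*m+1)+2 := by omega
    push_cast at h1
    rw [e1, e2, e3, e4, pow_add, pow_add, hXm, hp2, hc2]
    field_simp
    linear_combination (Real.sinh y ^ (2*m+1+2)
      * (1 + Real.sinh y ^ 2)) * h1


end PTaux2


open PTaux PTaux2 in
/-- With `a = (λ−k)/2`, `b = (λ+k)/2`, the odd solution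
`Υ_o(ζ) = (cosh ζ)^λ · sinh ζ · ₂F₁(a+1/2, b+1/2; 3/2; −sinh²ζ)` satisfies, at every `ζ`
with `|sinh ζ| < 1`, the Schrödinger equation with Pöschl–Teller potential
`Υ_o'' = (k² − λ(λ−1)/cosh²ζ) Υ_o`. -/
theorem poeschlTeller_odd_solution (k lam : ℝ) :
    let a : ℝ := (lam - k) / 2
    let b : ℝ := (lam + k) / 2
    let Uo : ℝ → ℝ := fun ζ =>
      Real.cosh ζ ^ lam * Real.sinh ζ *
        gaussHypergeom (a + 1 / 2) (b + 1 / 2) (3 / 2) (-(Real.sinh ζ ^ 2))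
    ∀ ζ : ℝ, |Real.sinh ζ| < 1 →
      DifferentiableAt ℝ Uo ζ ∧ DifferentiableAt ℝ (deriv Uo) ζ ∧
        deriv (deriv Uo) ζ =
          (k ^ 2 - lam * (lam - 1) / Real.cosh ζ ^ 2) * Uo ζ := by
  intro a b Uo ζ hζ
  have ha : a = (lam - k)/2 := rfl
  have hb : b = (lam + k)/2 := rfl
  set c : ℕ → ℝ := PTaux.cc (a + 1/2) (b + 1/2) with hc
  -- Uo as a series
  have hUofun : Uo = fun y => ∑' n, FF c lam n y := by
    funext y
    show Real.cosh y ^ lam * Real.sinh y *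
        gaussHypergeom (a + 1/2) (b + 1/2) (3/2) (-(Real.sinh y ^ 2)) = _
    rw [gaussHypergeom, ← tsum_mul_left]
    refine tsum_congr fun n => ?_
    show _ = PTaux.cc (a + 1/2) (b + 1/2) n * _
    unfold PTaux.cc PTaux.dd
    have h1 : ((ascPochhammer ℝ n).eval (3/2:ℝ)) ≠ 0 := (PTaux.poch32_pos n).ne'
    have h2 : ((n.factorial : ℝ)) ≠ 0 := by exact_mod_cast n.factorial_ne_zero
    have h3 : (-(Real.sinh y ^ 2))^n = (-1)^n * (Real.sinh y ^2)^n := by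
      rw [neg_pow]
    rw [h3]
    field_simp
    ring
  -- the radius and the interval
  set r : ℝ := (1 + |Real.sinh ζ|)/2 with hrdef
  have hr05 : 1/2 ≤ r := by
    have := abs_nonneg (Real.sinh ζ); rw [hrdef]; linarith
  have hr1 : r < 1 := by rw [hrdef]; linarith
  have hζr : |Real.sinh ζ| < r := by rw [hrdef]; linarith
  have hr0 : 0 < r := by linarith
  set t : Set ℝ := Set.Ioo (-(Real.arsinh r)) (Real.arsinh r) with htdef
  have htopen : IsOpen t := isOpen_Ioo
  have htconn : IsPreconnected t := isPreconnected_Ioo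
  have hmem : ∀ y : ℝ, y ∈ t ↔ |Real.sinh y| < r := by
    intro y
    rw [htdef, Set.mem_Ioo, abs_lt]
    constructor
    · rintro ⟨h1, h2⟩
      constructor
      · have := Real.sinh_lt_sinh.2 h1; rwa [Real.sinh_neg, Real.sinh_arsinh] at this
      · have := Real.sinh_lt_sinh.2 h2; rwa [Real.sinh_arsinh] at this
    · rintro ⟨h1, h2⟩
      constructor
      · exact Real.sinh_lt_sinh.1 (by rwa [Real.sinh_neg, Real.sinh_arsinh])
      · exact Real.sinh_lt_sinh.1 (by rwa [Real.sinh_arsinh])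
  have hζt : ζ ∈ t := (hmem ζ).2 hζr
  -- coefficient bounds
  set M : ℕ := ⌈|a + 1/2| ⊔ |b + 1/2|⌉₊ with hMdef
  have hAM : |a + 1/2| ≤ (M:ℝ) + 1 := by
    have := (le_max_left |a + 1/2| |b + 1/2|).trans (Nat.le_ceil _)
    rw [hMdef]; linarith
  have hBM : |b + 1/2| ≤ (M:ℝ) + 1 := by
    have := (le_max_right |a + 1/2| |b + 1/2|).trans (Nat.le_ceil _)
    rw [hMdef]; linarith
  have hcb : ∀ n, |c n| ≤ ((n:ℝ)+1)^(2*M) := fun n => by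
    rw [hc, PTaux.cc_abs]; exact PTaux.dd_abs_le _ _ M hAM hBM n
  set K : ℝ := (2:ℝ) ^ (|lam| + 2) with hKdef
  have hK1 : (1:ℝ) ≤ K := by
    rw [hKdef, show (1:ℝ) = (2:ℝ)^(0:ℝ) by simp]
    exact Real.rpow_le_rpow_of_exponent_le one_le_two (by positivity)
  have hcoshK : ∀ y ∈ t, ∀ p : ℝ, |p| ≤ |lam| + 2 → Real.cosh y ^ p ≤ K := by
    intro y hy p hp
    have hsy : |Real.sinh y| < r := (hmem y).1 hy
    have hs2 : Real.sinh y ^ 2 < 1 := by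
      nlinarith [sq_abs (Real.sinh y), mul_lt_mul' hsy.le hsy (abs_nonneg _) hr0, hr1, hr0]
    have hcosh2 : Real.cosh y ≤ 2 := by
      nlinarith [Real.cosh_sq' y, Real.cosh_pos y]
    rcases le_or_gt 0 p with hp0 | hp0
    · calc Real.cosh y ^ p ≤ 2 ^ p := Real.rpow_le_rpow (Real.cosh_pos y).le hcosh2 hp0
        _ ≤ K := by
          rw [hKdef]
          exact Real.rpow_le_rpow_of_exponent_le one_le_two ((le_abs_self p).trans hp)
    · calc Real.cosh y ^ p ≤ 1 :=
          Real.rpow_le_one_of_one_le_of_nonpos (Real.one_le_cosh y) hp0.le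
        _ ≤ K := hK1
  -- summable bound
  have hu_sum : Summable (PTaux2.uu lam M r K) := by
    have := (PTaux.summable_aux (2*M+2) (r^2) (by positivity) (by nlinarith)).mul_left
      (K*(|lam|+5)^2)
    exact this
  have hbnd : ∀ n : ℕ, ∀ y ∈ t,
      |FF c lam n y| ≤ uu lam M r K n ∧ |F1 c lam n y| ≤ uu lam M r K n ∧
      |F2 c lam n y| ≤ uu lam M r K n ∧ |EE c lam n y| ≤ uu lam M r K n := by
    intro n y hy
    exact PTaux2.bound_all c lam M hcb r K hr05 hr1.le hK1 y ((hmem y).1 hy).le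
      (fun p hp => hcoshK y hy p hp) n
  -- summability of the term series at points of t
  have hSF : ∀ y ∈ t, Summable fun n => FF c lam n y := fun y hy =>
    Summable.of_norm_bounded hu_sum fun n => by
      rw [Real.norm_eq_abs]; exact (hbnd n y hy).1
  have hSF1 : ∀ y ∈ t, Summable fun n => F1 c lam n y := fun y hy =>
    Summable.of_norm_bounded hu_sum fun n => by
      rw [Real.norm_eq_abs]; exact (hbnd n y hy).2.1
  have hSF2 : ∀ y ∈ t, Summable fun n => F2 c lam n y := fun y hy =>
    Summable.of_norm_bounded hu_sum fun n => by
      rw [Real.norm_eq_abs]; exact (hbnd n y hy).2.2.1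
  have hSE : Summable fun n => EE c lam n ζ :=
    Summable.of_norm_bounded hu_sum fun n => by
      rw [Real.norm_eq_abs]; exact (hbnd n ζ hζt).2.2.2
  -- differentiating the series twice
  have HD1 : ∀ y ∈ t, HasDerivAt (fun z => ∑' n, FF c lam n z) (∑' n, F1 c lam n y) y := by
    intro y hy
    exact hasDerivAt_tsum_of_isPreconnected hu_sum htopen htconn
      (fun n z _ => hasDerivAt_FF c lam n z)
      (fun n z hz => by rw [Real.norm_eq_abs]; exact (hbnd n z hz).2.1)
      hζt (hSF ζ hζt) hy
  have HD2 : ∀ y ∈ t, HasDerivAt (fun z => ∑' n, F1 c lam n z) (∑' n, F2 c lam n y) y := by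
    intro y hy
    exact hasDerivAt_tsum_of_isPreconnected hu_sum htopen htconn
      (fun n z _ => hasDerivAt_F1 c lam n z)
      (fun n z hz => by rw [Real.norm_eq_abs]; exact (hbnd n z hz).2.2.1)
      hζt (hSF1 ζ hζt) hy
  have hdUo : ∀ y ∈ t, deriv Uo y = ∑' n, F1 c lam n y := by
    intro y hy
    rw [hUofun]
    exact (HD1 y hy).deriv
  have hev : deriv Uo =ᶠ[nhds ζ] fun y => ∑' n, F1 c lam n y :=
    Filter.eventuallyEq_of_mem (htopen.mem_nhds hζt) hdUo
  refine ⟨?_, ?_, ?_⟩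
  · rw [hUofun]
    exact (HD1 ζ hζt).differentiableAt
  · exact (HD2 ζ hζt).differentiableAt.congr_of_eventuallyEq hev
  · have h1 : deriv (deriv Uo) ζ = ∑' n, F2 c lam n ζ := by
      rw [hev.deriv_eq]
      exact (HD2 ζ hζt).deriv
    rw [h1, hUofun]
    -- the series identity
    set w : ℝ := k ^ 2 - lam * (lam - 1) / Real.cosh ζ ^ 2 with hwdef
    have hptw : ∀ n, F2 c lam n ζ - w * FF c lam n ζ = EE c lam n ζ - EE c lam (n+1) ζ := by
      intro n
      exact PTaux2.key_pointwise c k lam (a + 1/2) (b + 1/2)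
        (by rw [ha]) (by rw [hb]) (fun m => PTaux.cc_rec _ _ m) n ζ
    have hSE1 : Summable fun n => EE c lam (n+1) ζ := by
      exact (summable_nat_add_iff 1).2 hSE
    have hSwF : Summable fun n => w * FF c lam n ζ := (hSF ζ hζt).mul_left w
    have hL : ∑' n, (F2 c lam n ζ - w * FF c lam n ζ)
        = ∑' n, F2 c lam n ζ - w * ∑' n, FF c lam n ζ := by
      rw [Summable.tsum_sub (hSF2 ζ hζt) hSwF, tsum_mul_left]
    have hR : ∑' n, (EE c lam n ζ - EE c lam (n+1) ζ) = 0 := by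
      rw [Summable.tsum_sub hSE hSE1]
      have h0 : ∑' n, EE c lam n ζ = EE c lam 0 ζ + ∑' n, EE c lam (n+1) ζ :=
        Summable.tsum_eq_zero_add hSE
      have hE0 : EE c lam 0 ζ = 0 := by norm_num [PTaux2.EE]
      rw [h0, hE0]
      ring
    have := (tsum_congr hptw).trans hR
    rw [hL] at this
    linarith
end

section
/- Let k, λ ∈ ℝ, let J ⊆ (1, ∞) be an open interval, and let v : J → ℝ be twice differentiable and satisfy the hypergeometric-type equation y(1−y)·v''(y) + ((λ + 1/2) − (λ+1)·y)·v'(y) + (1/4)(k² − λ²)·v(y) = 0 for all y ∈ J. Define Υ(ζ) = (cosh ζ)^λ · v(cosh²ζ). Then for every ζ ∈ ℝ with cosh²ζ ∈ J, Υ is twice differentiable at ζ and satisfies the Schrödinger equation with Pöschl–Teller potential Υ''(ζ) = (k² − λ(λ−1)/cosh²(ζ)) · Υ(ζ). -/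
/-- If `v` is twice differentiable on an open interval `J ⊆ (1,∞)` and
satisfies the hypergeometric-type equation
`y(1−y)v'' + ((λ+1/2) − (λ+1)y)v' + (1/4)(k² − λ²)v = 0` on `J`, then
`Υ(ζ) = (cosh ζ)^λ · v(cosh²ζ)` satisfies the Schrödinger equation with Pöschl–Teller
potential `Υ'' = (k² − λ(λ−1)/cosh²ζ)Υ` at every `ζ` with `cosh²ζ ∈ J`. -/
theorem hypergeometric_substitution_poeschlTeller
    (k lam p q : ℝ) (J : Set ℝ) (hJ : J = Set.Ioo p q) (hJ1 : J ⊆ Set.Ioi 1)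
    (v : ℝ → ℝ)
    (hv1 : ∀ y ∈ J, DifferentiableAt ℝ v y)
    (hv2 : ∀ y ∈ J, DifferentiableAt ℝ (deriv v) y)
    (hode : ∀ y ∈ J,
      y * (1 - y) * deriv (deriv v) y + ((lam + 1 / 2) - (lam + 1) * y) * deriv v y +
        (1 / 4) * (k ^ 2 - lam ^ 2) * v y = 0) :
    let U : ℝ → ℝ := fun ζ => Real.cosh ζ ^ lam * v (Real.cosh ζ ^ 2)
    ∀ ζ : ℝ, Real.cosh ζ ^ 2 ∈ J →
      DifferentiableAt ℝ U ζ ∧ DifferentiableAt ℝ (deriv U) ζ ∧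
        deriv (deriv U) ζ =
          (k ^ 2 - lam * (lam - 1) / Real.cosh ζ ^ 2) * U ζ := by
  intro U ζ hζ
  -- basic derivative facts
  have hcpos : ∀ x : ℝ, 0 < Real.cosh x := Real.cosh_pos
  have hrp : ∀ (m : ℝ) (x : ℝ),
      HasDerivAt (fun t => Real.cosh t ^ m) (m * Real.cosh x ^ (m - 1) * Real.sinh x) x := by
    intro m x
    have h := (Real.hasDerivAt_rpow_const (x := Real.cosh x) (p := m)
      (Or.inl (hcpos x).ne')).comp x (Real.hasDerivAt_cosh x)
    exact h
  have hy : ∀ x : ℝ, HasDerivAt (fun t => Real.cosh t ^ 2)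
      (2 * Real.cosh x * Real.sinh x) x := by
    intro x
    have := (Real.hasDerivAt_cosh x).pow 2
    exact this.congr_deriv (by push_cast; ring)
  -- the open set S
  set S : Set ℝ := (fun x => Real.cosh x ^ 2) ⁻¹' J with hS
  have hSopen : IsOpen S := by
    have : IsOpen J := by rw [hJ]; exact isOpen_Ioo
    exact this.preimage (by continuity)
  have hζS : ζ ∈ S := hζ
  -- first derivative of U
  set W : ℝ → ℝ := fun x =>
    lam * Real.cosh x ^ (lam - 1) * Real.sinh x * v (Real.cosh x ^ 2) +
      Real.cosh x ^ lam *
        (deriv v (Real.cosh x ^ 2) * (2 * Real.cosh x * Real.sinh x)) with hW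
  have hUW : ∀ x ∈ S, HasDerivAt U (W x) x := by
    intro x hx
    have hvc : HasDerivAt (fun t => v (Real.cosh t ^ 2))
        (deriv v (Real.cosh x ^ 2) * (2 * Real.cosh x * Real.sinh x)) x :=
      ((hv1 _ hx).hasDerivAt).comp x (hy x)
    exact (hrp lam x).mul hvc
  have hUdiff : DifferentiableAt ℝ U ζ := (hUW ζ hζS).differentiableAt
  have hderivU : deriv U =ᶠ[nhds ζ] W := by
    filter_upwards [hSopen.mem_nhds hζS] with x hx
    exact (hUW x hx).deriv
  -- second derivative
  set c := Real.cosh ζ with hc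
  set s := Real.sinh ζ with hsd
  have hy0 : c ^ 2 ∈ J := hζ
  have hdvc : HasDerivAt (fun t => deriv v (Real.cosh t ^ 2))
      (deriv (deriv v) (c ^ 2) * (2 * c * s)) ζ :=
    by have := ((hv2 _ hy0).hasDerivAt).comp ζ (hy ζ); exact this
  have hvc : HasDerivAt (fun t => v (Real.cosh t ^ 2))
      (deriv v (c ^ 2) * (2 * c * s)) ζ :=
    ((hv1 _ hy0).hasDerivAt).comp ζ (hy ζ)
  have hlm2 : lam - 1 - 1 = lam - 2 := by ring
  have h1 : HasDerivAt (fun t => Real.cosh t ^ (lam - 1))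
      ((lam - 1) * c ^ (lam - 2) * s) ζ := by
    have := hrp (lam - 1) ζ
    rwa [hlm2] at this
  have hterm1 : HasDerivAt (fun x => lam * Real.cosh x ^ (lam - 1) * Real.sinh x *
      v (Real.cosh x ^ 2))
      ((lam * ((lam - 1) * c ^ (lam - 2) * s) * s + lam * c ^ (lam - 1) * c) * v (c ^ 2) +
        lam * c ^ (lam - 1) * s * (deriv v (c ^ 2) * (2 * c * s))) ζ :=
    ((h1.const_mul lam).mul (Real.hasDerivAt_sinh ζ)).mul hvc
  have hterm2 : HasDerivAt (fun x => Real.cosh x ^ lam *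
      (deriv v (Real.cosh x ^ 2) * (2 * Real.cosh x * Real.sinh x)))
      (lam * c ^ (lam - 1) * s * (deriv v (c ^ 2) * (2 * c * s)) +
        c ^ lam * (deriv (deriv v) (c ^ 2) * (2 * c * s) * (2 * c * s) +
          deriv v (c ^ 2) * (2 * s * s + 2 * c * c))) ζ := by
    have h2cs : HasDerivAt (fun x => 2 * Real.cosh x * Real.sinh x)
        (2 * s * s + 2 * c * c) ζ := by
      have := ((Real.hasDerivAt_cosh ζ).const_mul 2).mul (Real.hasDerivAt_sinh ζ)
      exact this
    exact (hrp lam ζ).mul (hdvc.mul h2cs)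
  have hWder : HasDerivAt W
      (((lam * ((lam - 1) * c ^ (lam - 2) * s) * s + lam * c ^ (lam - 1) * c) * v (c ^ 2) +
        lam * c ^ (lam - 1) * s * (deriv v (c ^ 2) * (2 * c * s))) +
       (lam * c ^ (lam - 1) * s * (deriv v (c ^ 2) * (2 * c * s)) +
        c ^ lam * (deriv (deriv v) (c ^ 2) * (2 * c * s) * (2 * c * s) +
          deriv v (c ^ 2) * (2 * s * s + 2 * c * c)))) ζ := hterm1.add hterm2
  have hdU'diff : DifferentiableAt ℝ (deriv U) ζ :=
    (hWder.differentiableAt).congr_of_eventuallyEq hderivU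
  refine ⟨hUdiff, hdU'diff, ?_⟩
  have hdd : deriv (deriv U) ζ = deriv W ζ := Filter.EventuallyEq.deriv_eq hderivU
  rw [hdd, hWder.deriv]
  -- algebra
  have hode' := hode (c ^ 2) hy0
  have hsq : s ^ 2 = c ^ 2 - 1 := Real.sinh_sq ζ
  have hc0 : c ≠ 0 := (hcpos ζ).ne'
  have e1 : c ^ (lam - 1) = c ^ lam / c := by
    rw [Real.rpow_sub (hcpos ζ), Real.rpow_one]
  have e2 : c ^ (lam - 2) = c ^ lam / c ^ 2 := by
    rw [Real.rpow_sub (hcpos ζ), Real.rpow_two]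
  show _ = (k ^ 2 - lam * (lam - 1) / c ^ 2) * (c ^ lam * v (c ^ 2))
  rw [e1, e2]
  field_simp
  linear_combination (-4 * c ^ lam * c ^ 2) * hode' +
    (4 * c ^ lam * c ^ 4 * deriv (deriv v) (c ^ 2) +
      (4 * lam + 2) * c ^ lam * c ^ 2 * deriv v (c ^ 2) +
      lam * (lam - 1) * c ^ lam * v (c ^ 2)) * hsq
end

section
/- Consider three banks with assets A₁, A₂, A₃ > 0, external liabilities L₁, L₂, L₃ > 0, and interbank liabilities L_{ij} ≥ 0 for i ≠ j (L_{ij} being the amount bank i owes bank j). Set the total liabilities Pᵢ = Lᵢ + ∑_{j ≠ i} L_{ij}. Then there exists exactly one vector ω = (ω₁, ω₂, ω₃) ∈ [0, 1]³ satisfying the settlement (clearing) conditions min{ Aᵢ + ∑_{j ≠ i} ωⱼ·L_{ji} , Pᵢ } = ωᵢ·Pᵢ for i = 1, 2, 3. -/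
open Finset

/-- Existence and uniqueness of the Eisenberg–Noe style clearing
(settlement) vector for three banks with assets `A i > 0`, external liabilities
`L i > 0`, and interbank liabilities `Lij i j ≥ 0` (`i ≠ j`), where
`P i = L i + ∑_{j ≠ i} Lij i j` is the total liability of bank `i`:
there is exactly one `ω ∈ [0,1]³` with
`min (A i + ∑_{j ≠ i} ω j · Lij j i) (P i) = ω i · P i` for every `i`. -/
theorem clearing_vector_exists_unique
    (A L : Fin 3 → ℝ) (Lij : Fin 3 → Fin 3 → ℝ)
    (hA : ∀ i, 0 < A i) (hL : ∀ i, 0 < L i)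
    (hLij : ∀ i j, i ≠ j → 0 ≤ Lij i j) :
    let P : Fin 3 → ℝ := fun i => L i + ∑ j ∈ univ.erase i, Lij i j
    ∃! ω : Fin 3 → ℝ,
      (∀ i, ω i ∈ Set.Icc (0 : ℝ) 1) ∧
      ∀ i, min (A i + ∑ j ∈ univ.erase i, ω j * Lij j i) (P i) = ω i * P i := by
  intro P
  have hP : ∀ i, 0 < P i := by
    intro i
    have h0 : 0 ≤ ∑ j ∈ univ.erase i, Lij i j :=
      Finset.sum_nonneg fun j hj => hLij i j (Finset.ne_of_mem_erase hj).symm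
    have := hL i
    show 0 < L i + ∑ j ∈ univ.erase i, Lij i j
    linarith
  -- nonnegativity of interbank inflow sums
  have hSnn : ∀ (ω : Fin 3 → ℝ), (∀ j, 0 ≤ ω j) → ∀ i,
      0 ≤ ∑ j ∈ univ.erase i, ω j * Lij j i := by
    intro ω hω i
    exact Finset.sum_nonneg fun j hj =>
      mul_nonneg (hω j) (hLij j i (Finset.ne_of_mem_erase hj))
  -- the clearing map lands in [0,1]
  have hmem : ∀ (ω : Fin 3 → ℝ), (∀ j, 0 ≤ ω j) → ∀ i,
      min (A i + ∑ j ∈ univ.erase i, ω j * Lij j i) (P i) / P i ∈ Set.Icc (0:ℝ) 1 := by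
    intro ω hω i
    constructor
    · apply div_nonneg _ (hP i).le
      refine le_min ?_ (hP i).le
      have := hSnn ω hω i
      linarith [(hA i).le]
    · rw [div_le_one (hP i)]
      exact min_le_right _ _
  -- monotonicity of the clearing map
  have hmono : ∀ (ω ω' : Fin 3 → ℝ), (∀ j, ω j ≤ ω' j) → ∀ i,
      min (A i + ∑ j ∈ univ.erase i, ω j * Lij j i) (P i) / P i ≤
      min (A i + ∑ j ∈ univ.erase i, ω' j * Lij j i) (P i) / P i := by
    intro ω ω' h i
    have hsum : ∑ j ∈ univ.erase i, ω j * Lij j i ≤ ∑ j ∈ univ.erase i, ω' j * Lij j i :=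
      Finset.sum_le_sum fun j hj =>
        mul_le_mul_of_nonneg_right (h j) (hLij j i (Finset.ne_of_mem_erase hj))
    have hmin : min (A i + ∑ j ∈ univ.erase i, ω j * Lij j i) (P i) ≤
        min (A i + ∑ j ∈ univ.erase i, ω' j * Lij j i) (P i) :=
      min_le_min (by linarith) le_rfl
    exact div_le_div_of_nonneg_right hmin (hP i).le
  -- Existence via Knaster–Tarski on (Fin 3 → Icc 0 1)
  haveI : Fact ((0:ℝ) ≤ 1) := ⟨zero_le_one⟩
  let f : (Fin 3 → Set.Icc (0:ℝ) 1) →o (Fin 3 → Set.Icc (0:ℝ) 1) :=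
    ⟨fun x i => ⟨min (A i + ∑ j ∈ univ.erase i, (x j : ℝ) * Lij j i) (P i) / P i,
        hmem _ (fun j => (x j).2.1) i⟩,
      fun x y hxy i => Subtype.mk_le_mk.2 (hmono _ _ (fun j => Subtype.coe_le_coe.2 (hxy j)) i)⟩
  set ω₀ : Fin 3 → Set.Icc (0:ℝ) 1 := OrderHom.lfp f with hω₀
  have hfp : f ω₀ = ω₀ := OrderHom.map_lfp f
  have hcl : ∀ i, min (A i + ∑ j ∈ univ.erase i, (ω₀ j : ℝ) * Lij j i) (P i)
      = (ω₀ i : ℝ) * P i := by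
    intro i
    have h2 : min (A i + ∑ j ∈ univ.erase i, (ω₀ j : ℝ) * Lij j i) (P i) / P i
        = (ω₀ i : ℝ) := congrArg Subtype.val (congrFun hfp i)
    exact (div_eq_iff (hP i).ne').1 h2
  -- key comparison lemma: any clearing vector dominates any other
  have key : ∀ (ω ω' : Fin 3 → ℝ),
      (∀ i, ω i ∈ Set.Icc (0:ℝ) 1) →
      (∀ i, min (A i + ∑ j ∈ univ.erase i, ω j * Lij j i) (P i) = ω i * P i) →
      (∀ i, ω' i ∈ Set.Icc (0:ℝ) 1) →
      (∀ i, min (A i + ∑ j ∈ univ.erase i, ω' j * Lij j i) (P i) = ω' i * P i) →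
      ∀ i, ω' i ≤ ω i := by
    intro ω ω' hω hcω hω' hcω'
    have hminAP : ∀ i, 0 < min (A i) (P i) := fun i => lt_min (hA i) (hP i)
    have hpos' : ∀ i, 0 < ω' i := by
      intro i
      have h1 : min (A i) (P i) ≤ ω' i * P i := by
        rw [← hcω' i]
        refine min_le_min ?_ le_rfl
        have := hSnn ω' (fun j => (hω' j).1) i
        linarith
      nlinarith [hP i, hminAP i, (hω' i).1]
    set t := (univ : Finset (Fin 3)).inf' ⟨0, Finset.mem_univ 0⟩ (fun i => ω i / ω' i) with htdef
    obtain ⟨i0, -, hi0⟩ :=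
      Finset.exists_mem_eq_inf' (⟨0, Finset.mem_univ 0⟩ : (univ : Finset (Fin 3)).Nonempty)
        (fun i => ω i / ω' i)
    have ht_le : ∀ i, t * ω' i ≤ ω i := by
      intro i
      have h1 : t ≤ ω i / ω' i := Finset.inf'_le _ (Finset.mem_univ i)
      rw [le_div_iff₀ (hpos' i)] at h1
      linarith
    have ht0 : 0 ≤ t := by
      rw [htdef, hi0]
      exact div_nonneg (hω i0).1 (hpos' i0).le
    by_cases ht1 : 1 ≤ t
    · intro i
      have := ht_le i
      nlinarith [hpos' i]
    · exfalso
      push_neg at ht1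
      have hstrict : ∀ i, t * ω' i < ω i := by
        intro i
        set S' : ℝ := ∑ j ∈ univ.erase i, ω' j * Lij j i with hS'def
        -- step 1 : A i + t*S' ≤ A i + inflow of ω
        have hA1 : A i + t * S' ≤ A i + ∑ j ∈ univ.erase i, ω j * Lij j i := by
          have hsum : ∑ j ∈ univ.erase i, (t * ω' j) * Lij j i ≤
              ∑ j ∈ univ.erase i, ω j * Lij j i :=
            Finset.sum_le_sum fun j hj =>
              mul_le_mul_of_nonneg_right (ht_le j) (hLij j i (Finset.ne_of_mem_erase hj))
          have heq : ∑ j ∈ univ.erase i, (t * ω' j) * Lij j i = t * S' := by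
            rw [hS'def, Finset.mul_sum]
            exact Finset.sum_congr rfl fun j _ => by ring
          rw [heq] at hsum
          linarith
        -- step 2 : concavity of min
        have hmin2 : t * min (A i + S') (P i) + (1 - t) * min (A i) (P i)
            ≤ min (A i + t * S') (P i) := by
          refine le_min ?_ ?_
          · have u1 : t * min (A i + S') (P i) ≤ t * (A i + S') :=
              mul_le_mul_of_nonneg_left (min_le_left _ _) ht0
            have u2 : (1 - t) * min (A i) (P i) ≤ (1 - t) * A i :=
              mul_le_mul_of_nonneg_left (min_le_left _ _) (by linarith)
            linarith
          · have u1 : t * min (A i + S') (P i) ≤ t * P i :=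
              mul_le_mul_of_nonneg_left (min_le_right _ _) ht0
            have u2 : (1 - t) * min (A i) (P i) ≤ (1 - t) * P i :=
              mul_le_mul_of_nonneg_left (min_le_right _ _) (by linarith)
            linarith
        -- step 3 : chain
        have h3 : min (A i + t * S') (P i) ≤ ω i * P i := by
          rw [← hcω i]
          exact min_le_min (by linarith) le_rfl
        have h4 : t * (ω' i * P i) + (1 - t) * min (A i) (P i) ≤ ω i * P i := by
          rw [← hcω' i]
          calc t * min (A i + S') (P i) + (1 - t) * min (A i) (P i)
              ≤ min (A i + t * S') (P i) := hmin2
            _ ≤ ω i * P i := h3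
        have h5 : (t * ω' i) * P i < ω i * P i := by
          have := hminAP i
          nlinarith
        exact lt_of_mul_lt_mul_right h5 (hP i).le
      have heq : t * ω' i0 = ω i0 := by
        rw [htdef, hi0]
        exact div_mul_cancel₀ _ (hpos' i0).ne'
      exact absurd heq (ne_of_lt (hstrict i0))
  -- assemble
  refine ⟨fun i => (ω₀ i : ℝ), ⟨fun i => (ω₀ i).2, hcl⟩, ?_⟩
  rintro ω' ⟨hω'mem, hω'c⟩
  funext i
  exact le_antisymm
    (key (fun i => (ω₀ i : ℝ)) ω' (fun i => (ω₀ i).2) hcl hω'mem hω'c i)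
    (key ω' (fun i => (ω₀ i : ℝ)) hω'mem hω'c (fun i => (ω₀ i).2) hcl i)
end

section
/- Let ω̄ ∈ (0, π), let n be a positive integer, set k = πn/ω̄, and let λ ∈ ℝ. Define Ψ : [0, ω̄] × ℝ → ℝ by Ψ(φ, ζ) = sin(kφ) · e^{kζ} · ₂F₁(λ, 1−λ; 1+k; e^{2ζ}/(1+e^{2ζ})). Then: (i) Ψ is twice continuously differentiable and satisfies ∂²Ψ/∂φ² + ∂²Ψ/∂ζ² = −( λ(λ−1)/cosh²(ζ) )·Ψ on (0, ω̄) × ℝ; (ii) Ψ(0, ζ) = Ψ(ω̄, ζ) = 0 for all ζ ∈ ℝ; (iii) for each φ ∈ [0, ω̄], Ψ(φ, ζ) → 0 as ζ → −∞. -/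
open Real Set
open Filter FormalMultilinearSeries
open scoped NNReal ENNReal

namespace HGAux

noncomputable def hgc (lam k : ℝ) : ℕ → ℝ := fun n =>
  (ascPochhammer ℝ n).eval lam * (ascPochhammer ℝ n).eval (1 - lam) /
    ((ascPochhammer ℝ n).eval (1 + k) * n.factorial)

noncomputable def sh (c : ℕ → ℝ) : ℕ → ℝ := fun n => ((n : ℝ) + 1) * c (n + 1)

lemma tendsto_ratio (A B : ℝ) (hB : 0 < B) :
    Tendsto (fun n : ℕ => ((n : ℝ) + A) / ((n : ℝ) + B)) atTop (nhds 1) := by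
  have h1 : Tendsto (fun n : ℕ => ((n : ℝ) + B)) atTop atTop :=
    tendsto_atTop_add_const_right _ B tendsto_natCast_atTop_atTop
  have h2 : Tendsto (fun n : ℕ => 1 + (A - B) * ((n : ℝ) + B)⁻¹) atTop
      (nhds (1 + (A - B) * 0)) :=
    tendsto_const_nhds.add (h1.inv_tendsto_atTop.const_mul _)
  rw [mul_zero, add_zero] at h2
  refine h2.congr fun n => ?_
  have hnB : ((n : ℝ) + B) ≠ 0 := by positivity
  field_simp
  ring

lemma one_le_radius (c : ℕ → ℝ) (ρ : ℕ → ℝ)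
    (hρ : Tendsto ρ atTop (nhds 1)) (hrec : ∀ n, |c (n + 1)| ≤ ρ n * |c n|) :
    1 ≤ (ofScalars ℝ c).radius := by
  refine ENNReal.le_of_forall_nnreal_lt fun r hr => ?_
  have hr1 : (r : ℝ) < 1 := by exact_mod_cast hr
  have hr0 : (0:ℝ) ≤ (r : ℝ) := r.coe_nonneg
  apply FormalMultilinearSeries.le_radius_of_summable_norm
  simp only [ofScalars_norm]
  have hl : (1 + (r : ℝ)) / 2 < 1 := by linarith
  apply summable_of_ratio_norm_eventually_le hl
  have hev : ∀ᶠ n in atTop, ρ n * (r : ℝ) < (1 + (r : ℝ)) / 2 := by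
    have h := hρ.mul_const (r : ℝ)
    rw [one_mul] at h
    exact h.eventually_lt_const (by linarith)
  filter_upwards [hev] with n hn
  have key : |c (n + 1)| * (r : ℝ) ^ (n + 1) ≤ (ρ n * r) * (|c n| * (r : ℝ) ^ n) :=
    calc |c (n + 1)| * (r : ℝ) ^ (n + 1)
        ≤ (ρ n * |c n|) * (r : ℝ) ^ (n + 1) :=
          mul_le_mul_of_nonneg_right (hrec n) (by positivity)
      _ = (ρ n * r) * (|c n| * (r : ℝ) ^ n) := by ring
  have h1 : ‖‖c (n + 1)‖ * (r : ℝ) ^ (n + 1)‖ = |c (n + 1)| * (r : ℝ) ^ (n + 1) := by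
    rw [Real.norm_eq_abs, Real.norm_eq_abs, abs_of_nonneg (by positivity)]
  have h2 : ‖‖c n‖ * (r : ℝ) ^ n‖ = |c n| * (r : ℝ) ^ n := by
    rw [Real.norm_eq_abs, Real.norm_eq_abs, abs_of_nonneg (by positivity)]
  rw [h1, h2]
  calc |c (n + 1)| * (r : ℝ) ^ (n + 1) ≤ (ρ n * r) * (|c n| * (r : ℝ) ^ n) := key
    _ ≤ (1 + (r : ℝ)) / 2 * (|c n| * (r : ℝ) ^ n) :=
        mul_le_mul_of_nonneg_right hn.le (by positivity)




lemma hgc_succ (lam k : ℝ) (hk : 0 < k) (n : ℕ) :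
    hgc lam k (n + 1) =
      hgc lam k n * ((lam + n) * ((1 - lam) + n) / ((1 + k + n) * (n + 1))) := by
  have hP : (0:ℝ) < (ascPochhammer ℝ n).eval (1 + k) :=
    ascPochhammer_pos n _ (by linarith)
  have hf : (0:ℝ) < (n.factorial : ℝ) := by exact_mod_cast n.factorial_pos
  have h1 : ((1:ℝ) + k + n) ≠ 0 := by positivity
  have h2 : ((n : ℝ) + 1) ≠ 0 := by positivity
  simp only [hgc, ascPochhammer_succ_right, Polynomial.eval_mul, Polynomial.eval_add,
    Polynomial.eval_X, Polynomial.eval_natCast, Nat.factorial_succ, Nat.cast_mul,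
    Nat.cast_add, Nat.cast_one]
  field_simp

lemma hgc_rec (lam k : ℝ) (hk : 0 < k) (n : ℕ) :
    ((n : ℝ) + 1) * ((1 + k) + n) * hgc lam k (n + 1) =
      (lam + n) * ((1 - lam) + n) * hgc lam k n := by
  rw [hgc_succ lam k hk n]
  have h1 : ((1:ℝ) + k + n) ≠ 0 := by positivity
  have h2 : ((n : ℝ) + 1) ≠ 0 := by positivity
  field_simp

lemma hgc_ratio (lam k : ℝ) (hk : 0 < k) (n : ℕ) :
    |hgc lam k (n + 1)| ≤
      ((((n : ℝ) + max |lam| |1 - lam|) / ((n : ℝ) + 1)) ^ 2) * |hgc lam k n| := by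
  set C := max |lam| |1 - lam| with hC
  have hC0 : 0 ≤ C := le_trans (abs_nonneg lam) (le_max_left _ _)
  have hq : |(lam + n) * ((1 - lam) + n) / ((1 + k + n) * (n + 1))| ≤
      (((n : ℝ) + C) / ((n : ℝ) + 1)) ^ 2 := by
    rw [abs_div, abs_mul]
    have hden : |((1:ℝ) + k + n) * ((n : ℝ) + 1)| = ((1:ℝ) + k + n) * ((n : ℝ) + 1) :=
      abs_of_pos (by positivity)
    rw [hden, div_pow]
    have hnum1 : |lam + (n : ℝ)| ≤ (n : ℝ) + C := by
      calc |lam + (n : ℝ)| ≤ |lam| + |(n : ℝ)| := abs_add_le _ _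
        _ = |lam| + n := by rw [Nat.abs_cast]
        _ ≤ C + n := by have := le_max_left |lam| |1 - lam|; linarith
        _ = (n : ℝ) + C := by ring
    have hnum2 : |(1 - lam) + (n : ℝ)| ≤ (n : ℝ) + C := by
      calc |(1 - lam) + (n : ℝ)| ≤ |1 - lam| + |(n : ℝ)| := abs_add_le _ _
        _ = |1 - lam| + n := by rw [Nat.abs_cast]
        _ ≤ C + n := by have := le_max_right |lam| |1 - lam|; linarith
        _ = (n : ℝ) + C := by ring
    have hd : ((n : ℝ) + 1) ^ 2 ≤ ((1:ℝ) + k + n) * ((n : ℝ) + 1) := by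
      have hn0 : (0:ℝ) ≤ (n : ℝ) := n.cast_nonneg
      nlinarith [hk]
    have hnum : |lam + (n:ℝ)| * |(1 - lam) + (n:ℝ)| ≤ ((n:ℝ) + C) ^ 2 := by
      calc |lam + (n:ℝ)| * |(1 - lam) + (n:ℝ)| ≤ ((n:ℝ) + C) * ((n:ℝ) + C) :=
            mul_le_mul hnum1 hnum2 (abs_nonneg _) (by positivity)
        _ = ((n:ℝ) + C) ^ 2 := by ring
    exact div_le_div₀ (by positivity) hnum (by positivity) hd
  calc |hgc lam k (n + 1)|
      = |hgc lam k n| * |(lam + n) * ((1 - lam) + n) / ((1 + k + n) * (n + 1))| := by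
        rw [hgc_succ lam k hk n, abs_mul]
    _ ≤ |hgc lam k n| * ((((n : ℝ) + C) / ((n : ℝ) + 1)) ^ 2) :=
        mul_le_mul_of_nonneg_left hq (abs_nonneg _)
    _ = _ := by ring

lemma sh_ratio (c : ℕ → ℝ) (ρ : ℕ → ℝ) (hrec : ∀ n, |c (n + 1)| ≤ ρ n * |c n|) (n : ℕ) :
    |sh c (n + 1)| ≤ ((((n : ℝ) + 2) / ((n : ℝ) + 1)) * ρ (n + 1)) * |sh c n| := by
  have h1 : ((n : ℝ) + 1) ≠ 0 := by positivity
  have e1 : |sh c (n + 1)| = ((n : ℝ) + 2) * |c (n + 2)| := by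
    simp only [sh, abs_mul]
    rw [abs_of_nonneg (by positivity : (0:ℝ) ≤ ((n + 1 : ℕ) : ℝ) + 1)]
    push_cast
    ring
  have e2 : ((((n : ℝ) + 2) / ((n : ℝ) + 1)) * ρ (n + 1)) * |sh c n| =
      ((n : ℝ) + 2) * (ρ (n + 1) * |c (n + 1)|) := by
    simp only [sh, abs_mul]
    rw [abs_of_nonneg (by positivity : (0:ℝ) ≤ ((n : ℕ) : ℝ) + 1)]
    field_simp
  rw [e1, e2]
  exact mul_le_mul_of_nonneg_left (hrec (n + 1)) (by positivity)


lemma memball {y : ℝ} (h : |y| < 1) : y ∈ Metric.eball (0 : ℝ) 1 := by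
  rw [mem_emetric_ball_zero_iff]
  rw [show ((1 : ℝ≥0∞)) = ((1 : ℝ≥0) : ℝ≥0∞) by simp, enorm_eq_nnnorm, ENNReal.coe_lt_coe,
    ← NNReal.coe_lt_coe]
  simpa [Real.norm_eq_abs] using h

lemma hasSum_ofScalars (c : ℕ → ℝ) (h0 : 1 ≤ (ofScalars ℝ c).radius)
    {y : ℝ} (hy : |y| < 1) :
    HasSum (fun n => c n * y ^ n) ((ofScalars ℝ c).sum y) := by
  have hb : HasFPowerSeriesOnBall (ofScalars ℝ c).sum (ofScalars ℝ c) 0 1 :=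
    ((ofScalars ℝ c).hasFPowerSeriesOnBall (lt_of_lt_of_le one_pos h0)).mono one_pos h0
  have h := hb.hasSum (memball hy)
  rw [zero_add] at h
  have he : (fun n => (ofScalars ℝ c) n fun _ => y) = fun n => c n * y ^ n := by
    funext n
    rw [ofScalars_apply_eq, smul_eq_mul]
  rwa [he] at h

lemma hasDerivAt_ofScalarsSum (c : ℕ → ℝ)
    (h0 : 1 ≤ (ofScalars ℝ c).radius) (h1 : 1 ≤ (ofScalars ℝ (sh c)).radius)
    {y : ℝ} (hy : |y| < 1) (hy0 : y ≠ 0) :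
    HasDerivAt (ofScalars ℝ c).sum ((ofScalars ℝ (sh c)).sum y) y := by
  have hb : HasFPowerSeriesOnBall (ofScalars ℝ c).sum (ofScalars ℝ c) 0 1 :=
    ((ofScalars ℝ c).hasFPowerSeriesOnBall (lt_of_lt_of_le one_pos h0)).mono one_pos h0
  have hd : HasFPowerSeriesOnBall (fderiv ℝ (ofScalars ℝ c).sum)
      (ofScalars ℝ c).derivSeries 0 1 := hb.fderiv
  have hsum := hd.hasSum (memball hy)
  rw [zero_add] at hsum
  have happ := hsum.mapL (ContinuousLinearMap.apply ℝ ℝ y)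
  have hterm : ∀ n : ℕ, (ContinuousLinearMap.apply ℝ ℝ y)
      ((ofScalars ℝ c).derivSeries n fun _ => y) = y * (sh c n * y ^ n) := by
    intro n
    have := (ofScalars ℝ c).derivSeries_apply_diag n y
    simp only [ContinuousLinearMap.apply_apply]
    rw [this, ofScalars_apply_eq]
    simp only [nsmul_eq_mul, smul_eq_mul, sh]
    push_cast
    ring
  rw [funext hterm] at happ
  have hG := (hasSum_ofScalars (sh c) h1 hy).mul_left y
  have key : (ContinuousLinearMap.apply ℝ ℝ y) (fderiv ℝ (ofScalars ℝ c).sum y) =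
      y * (ofScalars ℝ (sh c)).sum y := happ.unique hG
  simp only [ContinuousLinearMap.apply_apply] at key
  have hdiff : DifferentiableAt ℝ (ofScalars ℝ c).sum y :=
    (hb.analyticAt_of_mem (memball hy)).differentiableAt
  have hder : fderiv ℝ (ofScalars ℝ c).sum y y = y * deriv (ofScalars ℝ c).sum y := by
    have h := (fderiv ℝ (ofScalars ℝ c).sum y).map_smul y (1 : ℝ)
    simp only [smul_eq_mul, mul_one] at h
    rw [h]
    rfl
  rw [hder] at key
  have : deriv (ofScalars ℝ c).sum y = (ofScalars ℝ (sh c)).sum y :=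
    mul_left_cancel₀ hy0 key
  rw [← this]
  exact hdiff.hasDerivAt
section Pack
variable (lam k : ℝ)

lemma hgc_radius (hk : 0 < k) : 1 ≤ (ofScalars ℝ (hgc lam k)).radius := by
  set C := max |lam| |1 - lam| with hC
  apply one_le_radius _ (fun n => (((n : ℝ) + C) / ((n : ℝ) + 1)) ^ 2)
  · have h := (tendsto_ratio C 1 one_pos).pow 2
    rw [one_pow] at h
    exact h
  · exact fun n => hgc_ratio lam k hk n

lemma sh_radius (c : ℕ → ℝ) (ρ : ℕ → ℝ) (hρ : Filter.Tendsto ρ Filter.atTop (nhds 1))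
    (hrec : ∀ n, |c (n + 1)| ≤ ρ n * |c n|) :
    1 ≤ (ofScalars ℝ (sh c)).radius := by
  apply one_le_radius _ (fun n => (((n : ℝ) + 2) / ((n : ℝ) + 1)) * ρ (n + 1))
  · have h1 := tendsto_ratio 2 1 one_pos
    have h2 : Filter.Tendsto (fun n : ℕ => ρ (n + 1)) Filter.atTop (nhds 1) :=
      hρ.comp (Filter.tendsto_add_atTop_nat 1)
    have := h1.mul h2
    rwa [one_mul] at this
  · exact fun n => sh_ratio c ρ hrec n

lemma hgc_ratio_tendsto :
    Filter.Tendsto (fun n : ℕ => (((n : ℝ) + max |lam| |1 - lam|) / ((n : ℝ) + 1)) ^ 2)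
      Filter.atTop (nhds 1) := by
  have h := (tendsto_ratio (max |lam| |1 - lam|) 1 one_pos).pow 2
  rwa [one_pow] at h

lemma sh_ratio_tendsto (ρ : ℕ → ℝ) (hρ : Filter.Tendsto ρ Filter.atTop (nhds 1)) :
    Filter.Tendsto (fun n : ℕ => (((n : ℝ) + 2) / ((n : ℝ) + 1)) * ρ (n + 1))
      Filter.atTop (nhds 1) := by
  have h1 := tendsto_ratio 2 1 one_pos
  have h2 : Filter.Tendsto (fun n : ℕ => ρ (n + 1)) Filter.atTop (nhds 1) :=
    hρ.comp (Filter.tendsto_add_atTop_nat 1)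
  have := h1.mul h2
  rwa [one_mul] at this

lemma c1_radius (hk : 0 < k) : 1 ≤ (ofScalars ℝ (sh (hgc lam k))).radius :=
  sh_radius _ _ (hgc_ratio_tendsto lam) (fun n => hgc_ratio lam k hk n)

lemma c2_radius (hk : 0 < k) : 1 ≤ (ofScalars ℝ (sh (sh (hgc lam k)))).radius :=
  sh_radius _ _ (sh_ratio_tendsto _ (hgc_ratio_tendsto lam))
    (fun n => sh_ratio _ _ (fun m => hgc_ratio lam k hk m) n)

lemma gauss_eq : gaussHypergeom lam (1 - lam) (1 + k) = (ofScalars ℝ (hgc lam k)).sum := by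
  funext z
  simp only [gaussHypergeom, FormalMultilinearSeries.sum]
  refine tsum_congr fun n => ?_
  rw [ofScalars_apply_eq, smul_eq_mul]
  simp only [hgc]
  ring

lemma hg_ode (hk : 0 < k) {y : ℝ} (hy : |y| < 1) :
    y * (1 - y) * (ofScalars ℝ (sh (sh (hgc lam k)))).sum y
      + (1 + k - 2 * y) * (ofScalars ℝ (sh (hgc lam k))).sum y
      = lam * (1 - lam) * (ofScalars ℝ (hgc lam k)).sum y := by
  have hsF := hasSum_ofScalars _ (hgc_radius lam k hk) hy
  have hsG := hasSum_ofScalars _ (c1_radius lam k hk) hy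
  have hsH := hasSum_ofScalars _ (c2_radius lam k hk) hy
  have hcomb := ((hsH.mul_left (y * (1 - y))).add (hsG.mul_left (1 + k - 2 * y))).sub
    (hsF.mul_left (lam * (1 - lam)))
  have hE : ∀ N : ℕ, (∑ i ∈ Finset.range N,
      (y * (1 - y) * (sh (sh (hgc lam k)) i * y ^ i)
        + (1 + k - 2 * y) * (sh (hgc lam k) i * y ^ i)
        - lam * (1 - lam) * (hgc lam k i * y ^ i)))
      = y ^ N * (lam * (1 - lam) * hgc lam k N - (1 + k) * sh (hgc lam k) N)
        - (N : ℝ) * sh (hgc lam k) N * y ^ (N + 1) := by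
    intro N
    induction N with
    | zero =>
      have key := hgc_rec lam k hk 0
      simp only [Finset.range_zero, Finset.sum_empty, sh, pow_zero, Nat.cast_zero]
      push_cast at key ⊢
      linear_combination key
    | succ N ih =>
      rw [Finset.sum_range_succ, ih]
      have key := hgc_rec lam k hk (N + 1)
      simp only [sh]
      push_cast at key ⊢
      linear_combination y ^ (N + 1) * key
  have t0 := hsF.summable.tendsto_atTop_zero
  have t1 := hsG.summable.tendsto_atTop_zero
  have t2 := hsH.summable.tendsto_atTop_zero
  have h3 : Filter.Tendsto
      (fun N : ℕ => (N : ℝ) * sh (hgc lam k) N * y ^ (N + 1)) Filter.atTop (nhds 0) := by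
    rw [← Filter.tendsto_add_atTop_iff_nat 1]
    have he : (fun N : ℕ => ((N + 1 : ℕ) : ℝ) * sh (hgc lam k) (N + 1) * y ^ ((N + 1) + 1))
        = fun N : ℕ => y ^ 2 * (sh (sh (hgc lam k)) N * y ^ N) := by
      funext N
      simp only [sh]
      push_cast
      ring
    rw [he]
    have := t2.const_mul (y ^ 2)
    simpa using this
  have hlim : Filter.Tendsto
      (fun N : ℕ => y ^ N * (lam * (1 - lam) * hgc lam k N - (1 + k) * sh (hgc lam k) N)
        - (N : ℝ) * sh (hgc lam k) N * y ^ (N + 1)) Filter.atTop (nhds 0) := by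
    have hA := ((t0.const_mul (lam * (1 - lam))).sub (t1.const_mul (1 + k))).sub h3
    simp only [mul_zero, sub_zero, zero_sub, sub_self] at hA
    have : (fun N : ℕ => lam * (1 - lam) * (hgc lam k N * y ^ N)
        - (1 + k) * (sh (hgc lam k) N * y ^ N)
        - (N : ℝ) * sh (hgc lam k) N * y ^ (N + 1))
        = fun N : ℕ => y ^ N * (lam * (1 - lam) * hgc lam k N - (1 + k) * sh (hgc lam k) N)
          - (N : ℝ) * sh (hgc lam k) N * y ^ (N + 1) := by
      funext N; ring
    rw [this] at hA
    simpa using hA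
  have hS : y * (1 - y) * (ofScalars ℝ (sh (sh (hgc lam k)))).sum y
      + (1 + k - 2 * y) * (ofScalars ℝ (sh (hgc lam k))).sum y
      - lam * (1 - lam) * (ofScalars ℝ (hgc lam k)).sum y = 0 := by
    refine tendsto_nhds_unique hcomb.tendsto_sum_nat ?_
    exact hlim.congr fun N => (hE N).symm
  linarith [hS]

end Pack

set_option maxHeartbeats 2000000 in
lemma hyper_pack (lam k : ℝ) (hk : 0 < k) :
    ∃ G H : ℝ → ℝ,
      (∀ y : ℝ, |y| < 1 → AnalyticAt ℝ (gaussHypergeom lam (1 - lam) (1 + k)) y) ∧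
      (∀ y : ℝ, |y| < 1 → y ≠ 0 →
        HasDerivAt (gaussHypergeom lam (1 - lam) (1 + k)) (G y) y) ∧
      (∀ y : ℝ, |y| < 1 → y ≠ 0 → HasDerivAt G (H y) y) ∧
      (∀ y : ℝ, |y| < 1 → y * (1 - y) * H y + (1 + k - 2 * y) * G y
        = lam * (1 - lam) * gaussHypergeom lam (1 - lam) (1 + k) y) := by
  refine ⟨(ofScalars ℝ (sh (hgc lam k))).sum, (ofScalars ℝ (sh (sh (hgc lam k)))).sum,
    ?_, ?_, ?_, ?_⟩
  · intro y hy
    rw [gauss_eq lam k]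
    have hb : HasFPowerSeriesOnBall (ofScalars ℝ (hgc lam k)).sum
        (ofScalars ℝ (hgc lam k)) 0 1 :=
      ((ofScalars ℝ (hgc lam k)).hasFPowerSeriesOnBall
        (lt_of_lt_of_le one_pos (hgc_radius lam k hk))).mono one_pos (hgc_radius lam k hk)
    exact hb.analyticAt_of_mem (memball hy)
  · intro y hy hy0
    rw [gauss_eq lam k]
    exact hasDerivAt_ofScalarsSum _ (hgc_radius lam k hk) (c1_radius lam k hk) hy hy0
  · intro y hy hy0
    exact hasDerivAt_ofScalarsSum _ (c1_radius lam k hk) (c2_radius lam k hk) hy hy0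
  · intro y hy
    rw [gauss_eq lam k]
    exact hg_ode lam k hk hy

noncomputable def zf (t : ℝ) : ℝ := Real.exp (2 * t) / (1 + Real.exp (2 * t))

lemma one_add_exp_pos (t : ℝ) : (0:ℝ) < 1 + Real.exp (2 * t) := by positivity

lemma zf_pos (t : ℝ) : 0 < zf t := div_pos (Real.exp_pos _) (one_add_exp_pos t)

lemma zf_lt_one (t : ℝ) : zf t < 1 := by
  rw [zf, div_lt_one (one_add_exp_pos t)]
  linarith

lemma zf_abs (t : ℝ) : |zf t| < 1 := by
  rw [abs_of_pos (zf_pos t)]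
  exact zf_lt_one t

lemma hasDerivAt_zf (t : ℝ) : HasDerivAt zf (2 * zf t * (1 - zf t)) t := by
  have h1 : HasDerivAt (fun u : ℝ => 2 * u) 2 t := by
    simpa using (hasDerivAt_id t).const_mul 2
  have he : HasDerivAt (fun u : ℝ => Real.exp (2 * u)) (2 * Real.exp (2 * t)) t := by
    have h := (Real.hasDerivAt_exp (2 * t)).comp t h1
    rw [show Real.exp (2 * t) * 2 = 2 * Real.exp (2 * t) from mul_comm _ _] at h
    exact h
  have hpos := one_add_exp_pos t
  have hd := he.div (he.const_add 1) (ne_of_gt hpos)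
  unfold zf
  refine hd.congr_deriv ?_
  field_simp

lemma zf_cosh (t : ℝ) : Real.cosh t ^ 2 * (4 * zf t * (1 - zf t)) = 1 := by
  unfold zf
  have h1 : Real.exp t ≠ 0 := (Real.exp_pos t).ne'
  have hpos := one_add_exp_pos t
  have he : Real.exp (2 * t) = Real.exp t * Real.exp t := by
    rw [← Real.exp_add]; ring_nf
  rw [Real.cosh_eq, Real.exp_neg, he]
  field_simp
  ring

lemma zf_tendsto : Filter.Tendsto zf Filter.atBot (nhds 0) := by
  have h2 : Filter.Tendsto (fun t : ℝ => 2 * t) Filter.atBot Filter.atBot :=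
    tendsto_id.const_mul_atBot two_pos
  have he : Filter.Tendsto (fun t : ℝ => Real.exp (2 * t)) Filter.atBot (nhds 0) :=
    Real.tendsto_exp_atBot.comp h2
  have hd : Filter.Tendsto (fun t : ℝ => 1 + Real.exp (2 * t)) Filter.atBot (nhds 1) := by
    have h := (tendsto_const_nhds (x := (1:ℝ)) (f := Filter.atBot)).add he
    simpa using h
  have := he.div hd one_ne_zero
  rw [zero_div] at this
  exact this

end HGAux

/-- For `ω̄ ∈ (0, π)`, `k = πn/ω̄` with `n ∈ ℕ` positive, and `λ ∈ ℝ`,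
the single term
`Ψ(φ, ζ) = sin(kφ)·e^{kζ}·₂F₁(λ, 1−λ; 1+k; e^{2ζ}/(1+e^{2ζ}))` of the angular
eigenfunction expansion is `C²`, satisfies
`Ψ_{φφ} + Ψ_{ζζ} = −(λ(λ−1)/cosh²ζ)Ψ` on `(0, ω̄) × ℝ`, vanishes on the lateral
boundaries `φ = 0` and `φ = ω̄`, and tends to `0` as `ζ → −∞`. -/
theorem angular_expansion_term_properties
    (ω : ℝ) (hω : ω ∈ Ioo 0 Real.pi) (n : ℕ) (hn : 0 < n) (k lam : ℝ)
    (hk : k = Real.pi * n / ω) :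
    let Ψ : ℝ → ℝ → ℝ := fun φ ζ =>
      Real.sin (k * φ) * Real.exp (k * ζ) *
        gaussHypergeom lam (1 - lam) (1 + k)
          (Real.exp (2 * ζ) / (1 + Real.exp (2 * ζ)))
    -- (i) regularity and the PDE
    (ContDiff ℝ 2 (fun p : ℝ × ℝ => Ψ p.1 p.2) ∧
      ∀ φ ∈ Ioo 0 ω, ∀ ζ : ℝ,
        deriv (deriv (fun s => Ψ s ζ)) φ + deriv (deriv (fun u => Ψ φ u)) ζ =
          -(lam * (lam - 1) / Real.cosh ζ ^ 2) * Ψ φ ζ) ∧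
    -- (ii) lateral boundary conditions
    (∀ ζ : ℝ, Ψ 0 ζ = 0 ∧ Ψ ω ζ = 0) ∧
    -- (iii) decay as ζ → −∞
    (∀ φ ∈ Icc 0 ω, Filter.Tendsto (fun ζ => Ψ φ ζ) Filter.atBot (nhds 0)) := by
  intro Ψ
  have hΨ : ∀ φ ζ : ℝ, Ψ φ ζ = Real.sin (k * φ) * Real.exp (k * ζ) *
      gaussHypergeom lam (1 - lam) (1 + k) (HGAux.zf ζ) := fun _ _ => rfl
  have hωpos : 0 < ω := hω.1
  have hkpos : 0 < k := by
    rw [hk]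
    have hnn : (0:ℝ) < (n : ℝ) := by exact_mod_cast hn
    have := Real.pi_pos
    positivity
  obtain ⟨G, H, hFan, hFG, hGH, hODE⟩ := HGAux.hyper_pack lam k hkpos
  refine ⟨⟨?_, ?_⟩, ?_, ?_⟩
  · -- ContDiff
    simp only [hΨ]
    rw [contDiff_iff_contDiffAt]
    intro q
    have hzC : ContDiff ℝ 2 (fun q : ℝ × ℝ => HGAux.zf q.2) := by
      unfold HGAux.zf
      apply ContDiff.div
      · exact Real.contDiff_exp.comp (contDiff_const.mul contDiff_snd)
      · exact contDiff_const.add (Real.contDiff_exp.comp (contDiff_const.mul contDiff_snd))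
      · intro q; positivity
    have h1 : ContDiffAt ℝ 2 (gaussHypergeom lam (1 - lam) (1 + k)) (HGAux.zf q.2) :=
      (hFan _ (HGAux.zf_abs q.2)).contDiffAt
    have h2 : ContDiffAt ℝ 2 (fun q : ℝ × ℝ => gaussHypergeom lam (1 - lam) (1 + k) (HGAux.zf q.2)) q :=
      h1.comp (g := gaussHypergeom lam (1 - lam) (1 + k)) q hzC.contDiffAt
    have h3 : ContDiffAt ℝ 2
        (fun q : ℝ × ℝ => Real.sin (k * q.1) * Real.exp (k * q.2)) q :=
      ((Real.contDiff_sin.comp (contDiff_const.mul contDiff_fst)).mul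
        (Real.contDiff_exp.comp (contDiff_const.mul contDiff_snd))).contDiffAt
    exact h3.mul h2
  · -- PDE
    intro φ hφmem ζ
    simp only [hΨ]
    have hza := HGAux.zf_abs ζ
    have hzne : HGAux.zf ζ ≠ 0 := (HGAux.zf_pos ζ).ne'
    have hks : ∀ s : ℝ, HasDerivAt (fun s : ℝ => k * s) k s := by
      intro s; simpa using (hasDerivAt_id s).const_mul k
    -- φ-direction
    have hφ1 : ∀ s : ℝ, HasDerivAt
        (fun s => Real.sin (k * s) * Real.exp (k * ζ) * gaussHypergeom lam (1 - lam) (1 + k) (HGAux.zf ζ))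
        (Real.cos (k * s) * k * Real.exp (k * ζ) * gaussHypergeom lam (1 - lam) (1 + k) (HGAux.zf ζ)) s := by
      intro s
      have hsin : HasDerivAt (fun s : ℝ => Real.sin (k * s)) (Real.cos (k * s) * k) s :=
        (Real.hasDerivAt_sin (k * s)).comp s (hks s)
      exact (hsin.mul_const _).mul_const _
    have e1 : deriv (fun s => Real.sin (k * s) * Real.exp (k * ζ) * gaussHypergeom lam (1 - lam) (1 + k) (HGAux.zf ζ))
        = fun s => Real.cos (k * s) * k * Real.exp (k * ζ) * gaussHypergeom lam (1 - lam) (1 + k) (HGAux.zf ζ) :=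
      funext fun s => (hφ1 s).deriv
    have hφ2 : HasDerivAt
        (fun s => Real.cos (k * s) * k * Real.exp (k * ζ) * gaussHypergeom lam (1 - lam) (1 + k) (HGAux.zf ζ))
        (-Real.sin (k * φ) * k * k * Real.exp (k * ζ) * gaussHypergeom lam (1 - lam) (1 + k) (HGAux.zf ζ)) φ := by
      have hcos : HasDerivAt (fun s : ℝ => Real.cos (k * s)) (-Real.sin (k * φ) * k) φ :=
        (Real.hasDerivAt_cos (k * φ)).comp φ (hks φ)
      exact ((hcos.mul_const k).mul_const _).mul_const _
    -- ζ-direction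
    have hexp : ∀ t : ℝ, HasDerivAt (fun u : ℝ => Real.exp (k * u))
        (Real.exp (k * t) * k) t := fun t => (Real.hasDerivAt_exp (k * t)).comp t (hks t)
    have hFz : ∀ t : ℝ, HasDerivAt (fun u => gaussHypergeom lam (1 - lam) (1 + k) (HGAux.zf u))
        (G (HGAux.zf t) * (2 * HGAux.zf t * (1 - HGAux.zf t))) t := fun t =>
      (hFG _ (HGAux.zf_abs t) (HGAux.zf_pos t).ne').comp t (HGAux.hasDerivAt_zf t)
    have hGz : ∀ t : ℝ, HasDerivAt (fun u => G (HGAux.zf u))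
        (H (HGAux.zf t) * (2 * HGAux.zf t * (1 - HGAux.zf t))) t := fun t =>
      (hGH _ (HGAux.zf_abs t) (HGAux.zf_pos t).ne').comp t (HGAux.hasDerivAt_zf t)
    have hD1 : ∀ t : ℝ, HasDerivAt (fun u => Real.exp (k * u) * gaussHypergeom lam (1 - lam) (1 + k) (HGAux.zf u))
        (Real.exp (k * t) * k * gaussHypergeom lam (1 - lam) (1 + k) (HGAux.zf t)
          + Real.exp (k * t) * (G (HGAux.zf t) * (2 * HGAux.zf t * (1 - HGAux.zf t)))) t :=
      fun t => (hexp t).mul (hFz t)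
    have e2 : (fun u => Real.sin (k * φ) * Real.exp (k * u) * gaussHypergeom lam (1 - lam) (1 + k) (HGAux.zf u))
        = fun u => Real.sin (k * φ) * (Real.exp (k * u) * gaussHypergeom lam (1 - lam) (1 + k) (HGAux.zf u)) := by
      funext u; ring
    have e3 : deriv (fun u => Real.sin (k * φ) * (Real.exp (k * u) * gaussHypergeom lam (1 - lam) (1 + k) (HGAux.zf u)))
        = fun u => Real.sin (k * φ) * (Real.exp (k * u) * k * gaussHypergeom lam (1 - lam) (1 + k) (HGAux.zf u)
          + Real.exp (k * u) * (G (HGAux.zf u) * (2 * HGAux.zf u * (1 - HGAux.zf u)))) :=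
      funext fun u => ((hD1 u).const_mul _).deriv
    have hw : ∀ t : ℝ, HasDerivAt (fun u => 2 * HGAux.zf u * (1 - HGAux.zf u))
        (2 * (2 * HGAux.zf t * (1 - HGAux.zf t)) * (1 - 2 * HGAux.zf t)) t := by
      intro t
      have h1 := (HGAux.hasDerivAt_zf t).const_mul 2
      have h2 := (hasDerivAt_const t (1:ℝ)).sub (HGAux.hasDerivAt_zf t)
      have := h1.mul h2
      refine this.congr_deriv ?_
      simp only [Pi.sub_apply]
      ring
    have hD2 : HasDerivAt
        (fun t => Real.exp (k * t) * k * gaussHypergeom lam (1 - lam) (1 + k) (HGAux.zf t)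
          + Real.exp (k * t) * (G (HGAux.zf t) * (2 * HGAux.zf t * (1 - HGAux.zf t))))
        (Real.exp (k * ζ) * k * k * gaussHypergeom lam (1 - lam) (1 + k) (HGAux.zf ζ)
            + Real.exp (k * ζ) * k * (G (HGAux.zf ζ) * (2 * HGAux.zf ζ * (1 - HGAux.zf ζ)))
          + (Real.exp (k * ζ) * k * (G (HGAux.zf ζ) * (2 * HGAux.zf ζ * (1 - HGAux.zf ζ)))
            + Real.exp (k * ζ) * (H (HGAux.zf ζ) * (2 * HGAux.zf ζ * (1 - HGAux.zf ζ))
                * (2 * HGAux.zf ζ * (1 - HGAux.zf ζ))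
              + G (HGAux.zf ζ) * (2 * (2 * HGAux.zf ζ * (1 - HGAux.zf ζ)) * (1 - 2 * HGAux.zf ζ))))) ζ := by
      have t1 := ((hexp ζ).mul_const k).mul (hFz ζ)
      have t2 := (hexp ζ).mul ((hGz ζ).mul (hw ζ))
      exact t1.add t2
    rw [e1, (hφ2).deriv, e2, e3, (hD2.const_mul (Real.sin (k * φ))).deriv]
    have hcosh := HGAux.zf_cosh ζ
    have hchne : Real.cosh ζ ≠ 0 := (Real.cosh_pos ζ).ne'
    have h4 : lam * (lam - 1) / Real.cosh ζ ^ 2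
        = lam * (lam - 1) * (4 * HGAux.zf ζ * (1 - HGAux.zf ζ)) := by
      rw [div_eq_iff (pow_ne_zero 2 hchne)]
      linear_combination (-(lam * (lam - 1))) * hcosh
    rw [h4]
    have hode := hODE (HGAux.zf ζ) hza
    linear_combination (Real.sin (k * φ) * Real.exp (k * ζ)
      * (4 * HGAux.zf ζ * (1 - HGAux.zf ζ))) * hode
  · -- boundary
    intro ζ
    constructor
    · simp [hΨ]
    · have hkω : k * ω = (n : ℝ) * Real.pi := by
        rw [hk]
        field_simp
      rw [hΨ, hkω, Real.sin_nat_mul_pi]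
      ring
  · -- decay
    intro φ hφmem
    simp only [hΨ]
    have hexp : Filter.Tendsto (fun ζ : ℝ => Real.exp (k * ζ)) Filter.atBot (nhds 0) :=
      Real.tendsto_exp_atBot.comp (tendsto_id.const_mul_atBot hkpos)
    have hz := HGAux.zf_tendsto
    have hFc : ContinuousAt (gaussHypergeom lam (1 - lam) (1 + k)) 0 := (hFan 0 (by norm_num)).continuousAt
    have hcomp : Filter.Tendsto (fun ζ : ℝ => gaussHypergeom lam (1 - lam) (1 + k) (HGAux.zf ζ)) Filter.atBot
        (nhds (gaussHypergeom lam (1 - lam) (1 + k) 0)) := hFc.tendsto.comp hz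
    have := ((tendsto_const_nhds (x := Real.sin (k * φ))
      (f := Filter.atBot)).mul hexp).mul hcomp
    simpa using this
end
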